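/- arXiv:2503.04374 — 8 statements merged into one kernel-verified Lean document; each statement's English description precedes it below -/
import Mathlib

section
/- For every (parametric) timed automaton A with clock set X there exists an equivalent (parametric) non-resetting-test timed automaton A' whose clock set X' has size |X| + 1; equivalence means that for every parameter interpretation I(μ) ∈ ℝ and every timed ω-word, A' has an accepting (parametric) run over that word under I if and only if A does, i.e., A and A' accept the same timed ω-language. -/
/-- Clock constraints over a set of clocks `X`, possibly mentioning one parameter `μ`:
`γ ::= z < c | z = c | z < μ | z = μ | ¬γ | γ ∧ γ`. -/
inductive ClockConstraint (X : Type) : Type where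
  | ltC : X → ℕ → ClockConstraint X
  | eqC : X → ℕ → ClockConstraint X
  | ltP : X → ClockConstraint X
  | eqP : X → ClockConstraint X
  | neg : ClockConstraint X → ClockConstraint X
  | conj : ClockConstraint X → ClockConstraint X → ClockConstraint X

namespace ClockConstraint

/-- Satisfaction of a clock constraint by a clock valuation `v`, under parameter value `μ`. -/
def sat {X : Type} (v : X → ℝ) (μ : ℝ) : ClockConstraint X → Prop
  | ltC z c => v z < (c : ℝ)
  | eqC z c => v z = (c : ℝ)
  | ltP z => v z < μ
  | eqP z => v z = μ
  | neg γ => ¬ sat v μ γ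
  | conj γ₁ γ₂ => sat v μ γ₁ ∧ sat v μ γ₂

/-- The set of clocks occurring in a clock constraint. -/
def clocks {X : Type} : ClockConstraint X → Set X
  | ltC z _ => {z}
  | eqC z _ => {z}
  | ltP z => {z}
  | eqP z => {z}
  | neg γ => clocks γ
  | conj γ₁ γ₂ => clocks γ₁ ∪ clocks γ₂

/-- Maximum constant appearing in a clock constraint. -/
def maxConst {X : Type} : ClockConstraint X → ℕ
  | ltC _ c => c
  | eqC _ c => c
  | ltP _ => 0
  | eqP _ => 0
  | neg γ => maxConst γ
  | conj γ₁ γ₂ => max (maxConst γ₁) (maxConst γ₂)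

/-- Does the parameter occur in a constraint? -/
def hasParam {X : Type} : ClockConstraint X → Prop
  | ltP _ => True
  | eqP _ => True
  | neg γ => hasParam γ
  | conj γ₁ γ₂ => hasParam γ₁ ∨ hasParam γ₂
  | _ => False

/-- Does a constant occur in a constraint? -/
def hasConst {X : Type} : ClockConstraint X → Prop
  | ltC _ _ => True
  | eqC _ _ => True
  | neg γ => hasConst γ
  | conj γ₁ γ₂ => hasConst γ₁ ∨ hasConst γ₂
  | _ => False

end ClockConstraint

/-- A (parametric) timed automaton with states `Q`, alphabet `A`, clocks `X`:
initial state, Büchi acceptance set, and transitions `q --(γ, a, S)--> q'`. -/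
structure PTA (Q A X : Type) where
  init : Q
  acc : Set Q
  trans : Set (Q × ClockConstraint X × A × Set X × Q)

/-- A (parametric) TA is a non-resetting-test TA if on every transition the clocks
tested in the guard are disjoint from the reset set. -/
def PTA.IsNrt {Q A X : Type} (M : PTA Q A X) : Prop :=
  ∀ t ∈ M.trans, t.2.1.clocks ∩ t.2.2.2.1 = ∅

/-- `q, v` is a (parametric) run of `M` over the timed ω-word `(π, τ)` under parameter
value `μ`.  Positions of the word are `1, 2, …`; conventionally `τ 0 = 0`. -/
def IsParamRun {Q A X : Type} (M : PTA Q A X) (μ : ℝ) (π : ℕ → A) (τ : ℕ → ℝ)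
    (q : ℕ → Q) (v : ℕ → X → ℝ) : Prop :=
  τ 0 = 0 ∧ (∀ i, 0 ≤ τ i) ∧ (∀ i, 1 ≤ i → τ i < τ (i + 1)) ∧
  q 0 = M.init ∧ (∀ z, v 0 z = 0) ∧
  ∀ i : ℕ, ∃ γ S, (q i, γ, π (i + 1), S, q (i + 1)) ∈ M.trans ∧
    ClockConstraint.sat (fun z => v i z + (τ (i + 1) - τ i)) μ γ ∧
    ∀ z, (z ∈ S → v (i + 1) z = 0) ∧
         (z ∉ S → v (i + 1) z = v i z + (τ (i + 1) - τ i))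

/-- `M` has an accepting (parametric) run over the timed ω-word `(π, τ)` under `μ`:
some accepting state occurs infinitely often along a run. -/
def AcceptsWord {Q A X : Type} (M : PTA Q A X) (μ : ℝ) (π : ℕ → A) (τ : ℕ → ℝ) : Prop :=
  ∃ q v, IsParamRun M μ π τ q v ∧ ∃ qf ∈ M.acc, ∀ n : ℕ, ∃ m, n ≤ m ∧ q m = qf

namespace ClockConstraint

/-- Rename the clocks of a constraint along a function. -/
def rename {X Y : Type} (f : X → Y) : ClockConstraint X → ClockConstraint Y
  | ltC z c => ltC (f z) c
  | eqC z c => eqC (f z) c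
  | ltP z => ltP (f z)
  | eqP z => eqP (f z)
  | neg γ => neg (rename f γ)
  | conj γ₁ γ₂ => conj (rename f γ₁) (rename f γ₂)

lemma sat_rename {X Y : Type} (f : X → Y) (v : Y → ℝ) (μ : ℝ) :
    ∀ γ : ClockConstraint X, (γ.rename f).sat v μ ↔ γ.sat (fun z => v (f z)) μ := by
  intro γ; induction γ <;> simp [rename, sat, *]

lemma clocks_rename_subset {X Y : Type} (f : X → Y) :
    ∀ γ : ClockConstraint X, (γ.rename f).clocks ⊆ Set.range f := by
  intro γ; induction γ with
  | ltC z c => simp [rename, clocks]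
  | eqC z c => simp [rename, clocks]
  | ltP z => simp [rename, clocks]
  | eqP z => simp [rename, clocks]
  | neg γ ih => simpa [rename, clocks] using ih
  | conj γ₁ γ₂ ih₁ ih₂ => simpa [rename, clocks] using Set.union_subset ih₁ ih₂

end ClockConstraint

lemma exists_not_mem_range' {X : Type} [Finite X] (σ : X → Option X) :
    ∃ p, p ∉ Set.range σ := by
  haveI := Fintype.ofFinite X
  by_contra h
  push_neg at h
  have hs : Function.Surjective σ := fun p => h p
  have := Fintype.card_le_of_surjective σ hs
  simp [Fintype.card_option] at this

lemma infinite_fiber' {B : Type} [Finite B] (s : Set ℕ) (hs : s.Infinite) (f : ℕ → B) :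
    ∃ b, {m ∈ s | f m = b}.Infinite := by
  haveI : Infinite s := hs.to_subtype
  obtain ⟨b, hb⟩ := Finite.exists_infinite_fiber (fun m : s => f m)
  refine ⟨b, ?_⟩
  rw [Set.infinite_coe_iff] at hb
  have h2 : (Subtype.val '' ((fun m : s => f m) ⁻¹' {b})).Infinite :=
    hb.image Subtype.val_injective.injOn
  refine h2.mono ?_
  rintro m ⟨⟨m, hm⟩, hfm, rfl⟩
  exact ⟨hm, hfm⟩


/-- For every (parametric) TA `M` with clock set `X` there is an equivalent (parametric)
non-resetting-test TA with clock set `Option X` (of size `|X| + 1`): for every parameter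
interpretation and every timed ω-word, the new automaton has an accepting parametric run
over that word iff `M` does. -/
theorem exists_equivalent_nrtTA_succ_clocks
    {Q A X : Type} [Finite Q] [Finite A] [Finite X]
    (M : PTA Q A X) (hfin : M.trans.Finite) :
    ∃ (Q' : Type) (_ : Finite Q') (M' : PTA Q' A (Option X)),
      M'.trans.Finite ∧ M'.IsNrt ∧
      ∀ (μ : ℝ) (π : ℕ → A) (τ : ℕ → ℝ),
        AcceptsWord M' μ π τ ↔ AcceptsWord M μ π τ := by
  classical
  haveI := Fintype.ofFinite X
  haveI : Finite (Option X) := inferInstance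
  haveI : Finite (X → Option X) := inferInstance
  set F : (Q × ClockConstraint X × A × Set X × Q) → (X → Option X) → Option X →
      ((Q × (X → Option X)) × ClockConstraint (Option X) × A × Set (Option X) ×
        (Q × (X → Option X))) :=
    fun t σ p =>
      ((t.1, σ), t.2.1.rename σ, t.2.2.1, ({p} : Set (Option X)),
        (t.2.2.2.2, fun z => if z ∈ t.2.2.2.1 then p else σ z)) with hF
  refine ⟨Q × (X → Option X), inferInstance,
    { init := (M.init, fun z => some z),
      acc := {s | s.1 ∈ M.acc},
      trans := {u | ∃ t ∈ M.trans, ∃ σ p, p ∉ Set.range σ ∧ u = F t σ p} }, ?_, ?_, ?_⟩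
  · -- finiteness
    have hsub : {u | ∃ t ∈ M.trans, ∃ σ p, p ∉ Set.range σ ∧ u = F t σ p} ⊆
        (fun x : (Q × ClockConstraint X × A × Set X × Q) × (X → Option X) × Option X =>
          F x.1 x.2.1 x.2.2) ''
          (M.trans ×ˢ (Set.univ : Set ((X → Option X) × Option X))) := by
      rintro u ⟨t, ht, σ, p, -, rfl⟩
      exact ⟨(t, σ, p), ⟨ht, trivial⟩, rfl⟩
    exact ((hfin.prod Set.finite_univ).image _).subset hsub
  · -- non-resetting tests
    rintro u ⟨t, ht, σ, p, hp, rfl⟩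
    simp only [hF]
    apply Set.eq_empty_of_subset_empty
    rintro x ⟨hx1, hx2⟩
    simp only [Set.mem_singleton_iff] at hx2
    subst hx2
    exact hp (ClockConstraint.clocks_rename_subset σ _ hx1)
  · -- language equivalence
    intro μ π τ
    constructor
    · -- M' accepts → M accepts
      rintro ⟨q', v', ⟨hτ0, hτnn, hτmono, hinit, hv0, hstep⟩, qf', hqf', hinf⟩
      refine ⟨fun i => (q' i).1, fun i z => v' i ((q' i).2 z),
        ⟨hτ0, hτnn, hτmono, congrArg Prod.fst hinit, fun z => hv0 _, ?_⟩,
        qf'.1, hqf', fun n => by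
          obtain ⟨m, hm, hq⟩ := hinf n
          exact ⟨m, hm, congrArg Prod.fst hq⟩⟩
      intro i
      obtain ⟨γ', S', hmem, hsat, hres⟩ := hstep i
      obtain ⟨t, ht, σ, p, hp, heq⟩ := hmem
      obtain ⟨q₀, γ, a, S, q₁⟩ := t
      simp only [hF, Prod.mk.injEq] at heq
      obtain ⟨hq0, hγ', ha, hS', hq1⟩ := heq
      have hσ2 : (q' i).2 = σ := congrArg Prod.snd hq0
      refine ⟨γ, S, ?_, ?_, ?_⟩
      · have e1 : (q' i).1 = q₀ := congrArg Prod.fst hq0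
        have e2 : (q' (i+1)).1 = q₁ := congrArg Prod.fst hq1
        show ((q' i).1, γ, π (i+1), S, (q' (i+1)).1) ∈ M.trans
        rw [e1, e2, ha]
        exact ht
      · have hs := hsat
        rw [hγ', ClockConstraint.sat_rename] at hs
        show ClockConstraint.sat (fun z => v' i ((q' i).2 z) + (τ (i+1) - τ i)) μ γ
        rw [hσ2]
        exact hs
      · intro z
        constructor
        · intro hz
          have e3 : (q' (i+1)).2 z = p := by
            have := congrArg Prod.snd hq1
            rw [this]; simp [hz]
          show v' (i+1) ((q' (i+1)).2 z) = 0
          rw [e3]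
          exact (hres p).1 (by rw [hS']; rfl)
        · intro hz
          have e3 : (q' (i+1)).2 z = σ z := by
            have := congrArg Prod.snd hq1
            rw [this]; simp [hz]
          have e4 : σ z ∉ S' := by
            rw [hS']
            intro hc
            exact hp ⟨z, hc⟩
          show v' (i+1) ((q' (i+1)).2 z) = v' i ((q' i).2 z) + (τ (i+1) - τ i)
          rw [e3, (hres (σ z)).2 e4, hσ2]
    · -- M accepts → M' accepts
      rintro ⟨q, v, ⟨hτ0, hτnn, hτmono, hinit, hv0, hstep⟩, qf, hqf, hinf⟩
      choose γ S hmem hsat hres using hstep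
      have hpick := fun σ : X → Option X => exists_not_mem_range' σ
      choose pick hpick using hpick
      let σ : ℕ → (X → Option X) := fun i =>
        Nat.rec (fun z => some z)
          (fun i σi => fun z => if z ∈ S i then pick σi else σi z) i
      have hσs : ∀ i, σ (i+1) = fun z => if z ∈ S i then pick (σ i) else σ i z :=
        fun i => rfl
      let v' : ℕ → Option X → ℝ := fun i =>
        Nat.rec (fun _ => 0)
          (fun i v'i => fun x => if x = pick (σ i) then 0
            else v'i x + (τ (i+1) - τ i)) i
      have hv'0 : ∀ x, v' 0 x = 0 := fun _ => rfl
      have hv's : ∀ i x, v' (i+1) x =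
          if x = pick (σ i) then 0 else v' i x + (τ (i+1) - τ i) := fun i x => rfl
      have hinv : ∀ i z, v' i (σ i z) = v i z := by
        intro i
        induction i with
        | zero => intro z; rw [hv0, hv'0]
        | succ i ih =>
          intro z
          by_cases hz : z ∈ S i
          · have h1 : σ (i+1) z = pick (σ i) := by rw [hσs]; simp [hz]
            rw [h1, hv's, if_pos rfl, ((hres i) z).1 hz]
          · have h1 : σ (i+1) z = σ i z := by rw [hσs]; simp [hz]
            have h2 : σ i z ≠ pick (σ i) := fun hc => hpick (σ i) ⟨z, hc⟩
            rw [h1, hv's, if_neg h2, ih, ((hres i) z).2 hz]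
      refine ⟨fun i => (q i, σ i), v',
        ⟨hτ0, hτnn, hτmono, ?_, hv'0, ?_⟩, ?_⟩
      · show (q 0, σ 0) = (M.init, fun z => some z)
        rw [hinit]
        rfl
      · intro i
        refine ⟨(γ i).rename (σ i), {pick (σ i)},
          ⟨(q i, γ i, π (i+1), S i, q (i+1)), hmem i, σ i, pick (σ i), hpick (σ i),
            rfl⟩, ?_, ?_⟩
        · rw [ClockConstraint.sat_rename]
          have : (fun z => v' i (σ i z) + (τ (i+1) - τ i)) =
              (fun z => v i z + (τ (i+1) - τ i)) := by
            funext z; rw [hinv]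
          show ClockConstraint.sat (fun z => v' i (σ i z) + (τ (i+1) - τ i)) μ (γ i)
          rw [this]
          exact hsat i
        · intro x
          constructor
          · intro hx
            rw [Set.mem_singleton_iff] at hx
            rw [hv's, if_pos hx]
          · intro hx
            rw [Set.mem_singleton_iff] at hx
            rw [hv's, if_neg hx]
      · have hsinf : {m | q m = qf}.Infinite := by
          apply Set.infinite_of_not_bddAbove
          rintro ⟨n, hn⟩
          obtain ⟨m, hm, hqm⟩ := hinf (n+1)
          have := hn hqm
          omega
        obtain ⟨σ₀, hσ₀⟩ := infinite_fiber' _ hsinf σ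
        refine ⟨(qf, σ₀), hqf, fun n => ?_⟩
        obtain ⟨m, ⟨hqm, hσm⟩, hgt⟩ := hσ₀.exists_gt n
        exact ⟨m, hgt.le, by show (q m, σ m) = (qf, σ₀); rw [hqm, hσm]⟩
end

section
/- Let A = (Σ, Q, T, q0, B) be a parametric non-resetting-test timed automaton with one parameter whose set of clocks is X = {x, y}, let C = C_A, and let I(μ) = μ̄ be a parameter interpretation such that A has a parametric run ρ over a timed word (π, τ). Suppose ρ has the form ρ_pref ρ_0 ρ_1 ... ρ_n ρ_suff where, for all 0 ≤ i ≤ n, ρ_i is a one-reset sequence of configurations for the same clock z1 ∈ X, and the initial valuations of all the ρ_i are pairwise in agreement (both under interpretation μ̄, with constant C). Then there exist sequences of configurations ρ'_0, ρ'_1, ..., ρ'_{n'} with n' ≤ |Q| such that ρ_pref ρ'_0 ρ'_1 ... ρ'_{n'} ρ_suff is also a parametric run of A over some timed word with interpretation I(μ) = μ̄. -/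
/-- A concretely presented parametric TA with `k` clocks: states `Fin (nQ+1)`,
alphabet `Fin (nA+1)`, transitions given by a list. -/
structure ConcretePTA (k : ℕ) where
  nQ : ℕ
  nA : ℕ
  init : Fin (nQ + 1)
  acc : Finset (Fin (nQ + 1))
  trans : List (Fin (nQ + 1) × ClockConstraint (Fin k) × Fin (nA + 1) ×
    Finset (Fin k) × Fin (nQ + 1))

/-- Semantics of a concretely presented automaton. -/
def ConcretePTA.toPTA {k : ℕ} (M : ConcretePTA k) :
    PTA (Fin (M.nQ + 1)) (Fin (M.nA + 1)) (Fin k) where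
  init := M.init
  acc := ↑M.acc
  trans := {t | ∃ tr ∈ M.trans,
    t = (tr.1, tr.2.1, tr.2.2.1, (↑tr.2.2.2.1 : Set (Fin k)), tr.2.2.2.2)}

/-- The maximum constant `C_A` appearing in the guards of the automaton. -/
def ConcretePTA.maxConstant {k : ℕ} (M : ConcretePTA k) : ℕ :=
  (M.trans.map (fun tr => tr.2.1.maxConst)).foldr max 0

/-- If the parameter occurs in a guard, then no constant occurs in that guard. -/
def ConcretePTA.ParamSep {k : ℕ} (M : ConcretePTA k) : Prop :=
  ∀ tr ∈ M.trans, ¬ (tr.2.1.hasParam ∧ tr.2.1.hasConst)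

/-- Two clock valuations are in agreement (w.r.t. constant `C` and parameter value `μ`):
they satisfy the same constraints `z ∼ c` (for `c ≤ 2C`) and `z ∼ μ`, `∼ ∈ {<, =}`. -/
def Agree (C : ℕ) (μ : ℝ) (v w : Fin 2 → ℝ) : Prop :=
  ∀ z : Fin 2,
    (∀ c : ℕ, c ≤ 2 * C →
      ((v z < (c : ℝ) ↔ w z < (c : ℝ)) ∧ (v z = (c : ℝ) ↔ w z = (c : ℝ)))) ∧
    (v z < μ ↔ w z < μ) ∧ (v z = μ ↔ w z = μ)

namespace ClockConstraint

variable {X : Type}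

theorem clocks_nonempty (γ : ClockConstraint X) : γ.clocks.Nonempty := by
  induction γ with
  | neg _ ih => exact ih
  | conj _ _ ih _ => exact ih.mono Set.subset_union_left
  | _ => exact Set.singleton_nonempty _

theorem sat_iff_of_agree {γ : ClockConstraint X} {μ : ℝ} {u w : X → ℝ}
    (h : ∀ z ∈ γ.clocks,
      (∀ c : ℕ, c ≤ γ.maxConst → (u z < c ↔ w z < c) ∧ (u z = c ↔ w z = c)) ∧
        (u z < μ ↔ w z < μ) ∧ (u z = μ ↔ w z = μ)) :
    γ.sat u μ ↔ γ.sat w μ := by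
  induction γ with
  | ltC z c => exact ((h z rfl).1 c le_rfl).1
  | eqC z c => exact ((h z rfl).1 c le_rfl).2
  | ltP z => exact (h z rfl).2.1
  | eqP z => exact (h z rfl).2.2
  | neg γ ih => exact not_congr (ih h)
  | conj γ₁ γ₂ ih₁ ih₂ =>
    refine and_congr (ih₁ fun z hz => ?_) (ih₂ fun z hz => ?_)
    · obtain ⟨hc, hμ⟩ := h z (Or.inl hz)
      exact ⟨fun c hc' => hc c (le_max_of_le_left hc'), hμ⟩
    · obtain ⟨hc, hμ⟩ := h z (Or.inr hz)
      exact ⟨fun c hc' => hc c (le_max_of_le_right hc'), hμ⟩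

end ClockConstraint

theorem ConcretePTA.maxConst_le_maxConstant {k : ℕ} (M : ConcretePTA k) {t}
    (ht : t ∈ M.toPTA.trans) : t.2.1.maxConst ≤ M.maxConstant := by
  obtain ⟨tr, htr, rfl⟩ := ht
  exact List.le_max_of_le' 0 (List.mem_map_of_mem htr) le_rfl

theorem Fin.two_eq_or_eq_one_sub (z w : Fin 2) : w = z ∨ w = 1 - z := by
  fin_cases z <;> fin_cases w <;> decide

def PTA.Step {Q A X : Type} (M : PTA Q A X) (μ : ℝ) (q : Q) (u : X → ℝ) (a : A) (δ : ℝ)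
    (q' : Q) (w : X → ℝ) : Prop :=
  ∃ γ S, (q, γ, a, S, q') ∈ M.trans ∧ γ.sat (fun z => u z + δ) μ ∧
    ∀ z, (z ∈ S → w z = 0) ∧ (z ∉ S → w z = u z + δ)

structure OneResetBlocks {X : Type} (τ : ℕ → ℝ) (v : ℕ → X → ℝ) (z1 : X) (n : ℕ)
    (s : ℕ → ℕ) : Prop where
  lt_succ : ∀ i ≤ n, s i < s (i + 1)
  reset : ∀ i ≤ n, v (s i) z1 = 0
  elapse : ∀ i ≤ n, ∀ j, s i ≤ j → j + 1 < s (i + 1) →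
    ∀ z, v (j + 1) z = v j z + (τ (j + 1) - τ j)

def skipIndex (p D t : ℕ) : ℕ := if t < p then t else t + D

theorem skipIndex_of_lt {p D t : ℕ} (h : t < p) : skipIndex p D t = t := if_pos h

theorem skipIndex_of_le {p D t : ℕ} (h : p ≤ t) : skipIndex p D t = t + D :=
  if_neg (Nat.not_lt.mpr h)

theorem le_skipIndex (p D t : ℕ) : t ≤ skipIndex p D t := by
  unfold skipIndex; split_ifs <;> omega

theorem strictMono_skipIndex (p D : ℕ) : StrictMono (skipIndex p D) :=
  strictMono_nat_of_lt_succ fun t => by unfold skipIndex; split_ifs <;> omega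

namespace IsParamRun

variable {Q A X : Type} {M : PTA Q A X} {μ : ℝ} {π : ℕ → A} {τ : ℕ → ℝ} {q : ℕ → Q}
  {v : ℕ → X → ℝ}

theorem step (h : IsParamRun M μ π τ q v) (t : ℕ) :
    M.Step μ (q t) (v t) (π (t + 1)) (τ (t + 1) - τ t) (q (t + 1)) (v (t + 1)) :=
  h.2.2.2.2.2 t

theorem time_lt (h : IsParamRun M μ π τ q v) {a b : ℕ} (ha : 1 ≤ a) (hab : a < b) :
    τ a < τ b :=
  Nat.rel_of_forall_rel_succ_of_le_of_lt (· < ·) h.2.2.1 ha hab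

theorem time_mono (h : IsParamRun M μ π τ q v) : Monotone τ := by
  refine monotone_nat_of_le_succ fun t => ?_
  rcases Nat.eq_zero_or_pos t with rfl | ht
  · exact h.1 ▸ h.2.1 1
  · exact (h.time_lt ht t.lt_succ_self).le

theorem clock_nonneg (h : IsParamRun M μ π τ q v) (t : ℕ) (z : X) : 0 ≤ v t z := by
  induction t with
  | zero => exact (h.2.2.2.2.1 z).ge
  | succ t ih =>
    obtain ⟨-, S, -, -, hw⟩ := h.step t
    have hδ := sub_nonneg.mpr (h.time_mono t.le_succ)
    by_cases hz : z ∈ S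
    · exact ((hw z).1 hz).ge
    · rw [(hw z).2 hz]; positivity

theorem delay_pos_or_eq_zero (h : IsParamRun M μ π τ q v) (t : ℕ) :
    0 < τ (t + 1) - τ t ∨ v t = 0 := by
  rcases Nat.eq_zero_or_pos t with rfl | ht
  · exact Or.inr (funext h.2.2.2.2.1)
  · exact Or.inl (sub_pos.mpr (h.time_lt ht t.lt_succ_self))

theorem skip {c D : ℕ} (h : IsParamRun M μ π τ q v) (hc : 0 < c)
    (hstep : M.Step μ (q (c - 1)) (v (c - 1)) (π c) (τ (c + D) - τ (c - 1))
      (q (c + D)) (v (c + D))) :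
    IsParamRun M μ (π ∘ skipIndex (c + 1) D) (τ ∘ skipIndex c D) (q ∘ skipIndex c D)
      (v ∘ skipIndex c D) := by
  have h0 : skipIndex c D 0 = 0 := skipIndex_of_lt hc
  refine ⟨by simp [h0, h.1], fun t => h.2.1 _, fun t ht => ?_, by simp [h0, h.2.2.2.1],
    fun z => by simp [h0, h.2.2.2.2.1], fun t => ?_⟩
  · exact h.time_lt (ht.trans (le_skipIndex c D t)) (strictMono_skipIndex c D t.lt_succ_self)
  obtain ⟨p, rfl⟩ : ∃ p, c = p + 1 := ⟨c - 1, by omega⟩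
  rw [Nat.add_sub_cancel] at hstep
  change M.Step μ (q (skipIndex (p + 1) D t)) (v (skipIndex (p + 1) D t))
    (π (skipIndex (p + 1 + 1) D (t + 1)))
    (τ (skipIndex (p + 1) D (t + 1)) - τ (skipIndex (p + 1) D t))
    (q (skipIndex (p + 1) D (t + 1))) (v (skipIndex (p + 1) D (t + 1)))
  rcases lt_trichotomy t p with ht | rfl | ht
  · rw [skipIndex_of_lt (by omega : t < p + 1), skipIndex_of_lt (by omega : t + 1 < p + 1),
      skipIndex_of_lt (by omega : t + 1 < p + 1 + 1)]
    exact h.step t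
  · rw [skipIndex_of_lt t.lt_succ_self, skipIndex_of_le le_rfl,
      skipIndex_of_lt (t + 1).lt_succ_self]
    exact hstep
  · rw [skipIndex_of_le (by omega : p + 1 ≤ t), skipIndex_of_le (by omega : p + 1 ≤ t + 1),
      skipIndex_of_le (by omega : p + 1 + 1 ≤ t + 1), Nat.add_right_comm t 1 D]
    exact h.step (t + D)

end IsParamRun

namespace OneResetBlocks

variable {X : Type} {τ : ℕ → ℝ} {v : ℕ → X → ℝ} {z1 : X} {n : ℕ} {s : ℕ → ℕ}

theorem strictMonoOn (hb : OneResetBlocks τ v z1 n s) : StrictMonoOn s (Set.Iic (n + 1)) :=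
  strictMonoOn_Iic_of_lt_succ fun m hm => by
    simpa only [Order.succ_eq_add_one] using hb.lt_succ m (Nat.lt_succ_iff.mp hm)

theorem lt_of_lt (hb : OneResetBlocks τ v z1 n s) {a b : ℕ} (hab : a < b) (hb' : b ≤ n + 1) :
    s a < s b :=
  hb.strictMonoOn (Set.mem_Iic.mpr (by omega)) (Set.mem_Iic.mpr hb') hab

theorem le_of_le (hb : OneResetBlocks τ v z1 n s) {a b : ℕ} (hab : a ≤ b) (hb' : b ≤ n + 1) :
    s a ≤ s b :=
  hab.eq_or_lt.elim (fun h => h ▸ le_rfl) fun h => (hb.lt_of_lt h hb').le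

theorem eq_add_of_mem (hb : OneResetBlocks τ v z1 n s) {k t : ℕ} (hk : k ≤ n)
    (ht : s k ≤ t) (ht' : t < s (k + 1)) (z : X) : v t z = v (s k) z + (τ t - τ (s k)) := by
  induction t, ht using Nat.le_induction with
  | base => ring
  | succ t ht ih =>
    rw [hb.elapse k hk t ht ht' z, ih (by omega)]
    ring

end OneResetBlocks

section TwoClocks

variable {Q A : Type} {M : PTA Q A (Fin 2)} {μ : ℝ} {z1 : Fin 2}

theorem PTA.IsNrt.clocks_subset_of_mem_reset (hnrt : M.IsNrt) {q q' : Q} {γ a S}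
    (ht : (q, γ, a, S, q') ∈ M.trans) (hz : z1 ∈ S) :
    γ.clocks ⊆ {1 - z1} ∧ 1 - z1 ∉ S := by
  have hdisj : γ.clocks ∩ S = ∅ := hnrt _ ht
  have hsub : γ.clocks ⊆ {1 - z1} := fun w hw => by
    rcases Fin.two_eq_or_eq_one_sub z1 w with rfl | rfl
    · exact absurd (Set.mem_inter hw hz) (hdisj ▸ Set.notMem_empty _)
    · rfl
  refine ⟨hsub, fun hz' => ?_⟩
  obtain ⟨w, hw⟩ := γ.clocks_nonempty
  rw [Set.mem_singleton_iff.mp (hsub hw)] at hw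
  exact absurd (Set.mem_inter hw hz') (hdisj ▸ Set.notMem_empty _)

theorem PTA.Step.other_clock_eq (hnrt : M.IsNrt) {q q' : Q} {u w : Fin 2 → ℝ} {a : A}
    {δ : ℝ} (h : M.Step μ q u a δ q' w) (hu : 0 ≤ u z1) (hδ : 0 < δ) (hw : w z1 = 0) :
    w (1 - z1) = u (1 - z1) + δ := by
  obtain ⟨γ, S, ht, -, hres⟩ := h
  have hz : z1 ∈ S := by
    by_contra hz
    linarith [(hres z1).2 hz]
  exact (hres _).2 (hnrt.clocks_subset_of_mem_reset ht hz).2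

/-- The step into `w` resets `z1`, so its guard tests only the other clock, on which `w` and
`w'` agree. -/
theorem PTA.Step.redirect (hnrt : M.IsNrt) {C : ℕ}
    (hC : ∀ t ∈ M.trans, t.2.1.maxConst ≤ 2 * C) {q q' : Q} {u w w' : Fin 2 → ℝ} {a : A}
    {δ δ' : ℝ} (h : M.Step μ q u a δ q' w) (hu : ∀ z, 0 ≤ u z) (hδ : 0 < δ ∨ u = 0)
    (hw : w z1 = 0) (hw' : w' z1 = 0) (hδδ' : δ < δ')
    (hother : w' (1 - z1) = w (1 - z1) + (δ' - δ)) (hagree : Agree C μ w w') :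
    M.Step μ q u a δ' q' w' := by
  obtain ⟨γ, S, ht, hsat, hres⟩ := h
  have hz : z1 ∈ S := by
    by_contra hz
    have h0 := (hres z1).2 hz
    rcases hδ with hδ | rfl
    · linarith [hu z1]
    -- from the initial valuation with no delay `w = 0`; agreement at the constant `0` then
    -- forces `w' (1 - z1) = 0`, contradicting `δ < δ'`
    have hw2 : w (1 - z1) = 0 := by
      by_cases hz2 : 1 - z1 ∈ S
      · exact (hres _).1 hz2
      · simp only [(hres _).2 hz2, Pi.zero_apply] at h0 ⊢; linarith
    have hw'2 := ((hagree (1 - z1)).1 0 (Nat.zero_le _)).2.mp (by simpa using hw2)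
    simp only [Nat.cast_zero] at hw'2
    linarith
  obtain ⟨hsub, hz2⟩ := hnrt.clocks_subset_of_mem_reset ht hz
  have hw2 : w (1 - z1) = u (1 - z1) + δ := (hres _).2 hz2
  refine ⟨γ, S, ht, (ClockConstraint.sat_iff_of_agree fun z hzγ => ?_).mp hsat, fun z => ?_⟩
  · obtain rfl := Set.mem_singleton_iff.mp (hsub hzγ)
    obtain ⟨hc, hμ⟩ := hagree (1 - z1)
    rw [← hw2, show u (1 - z1) + δ' = w' (1 - z1) by linarith]
    exact ⟨fun c hc' => hc c (hc'.trans (hC _ ht)), hμ⟩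
  · rcases Fin.two_eq_or_eq_one_sub z1 z with rfl | rfl
    · exact ⟨fun _ => hw', fun hz' => absurd hz hz'⟩
    · exact ⟨fun hz' => absurd hz' hz2, fun _ => by linarith⟩

variable {π : ℕ → A} {τ : ℕ → ℝ} {q : ℕ → Q} {v : ℕ → Fin 2 → ℝ} {n : ℕ} {s : ℕ → ℕ}

/-- A block start after the first is entered with positive delay, so the step resets `z1`
and therefore not the other clock. -/
theorem OneResetBlocks.other_clock_eq (hnrt : M.IsNrt) (hrun : IsParamRun M μ π τ q v)
    (hb : OneResetBlocks τ v z1 n s) {i j : ℕ} (hi : 1 ≤ i) (hij : i ≤ j) (hj : j ≤ n) :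
    v (s j) (1 - z1) = v (s i) (1 - z1) + (τ (s j) - τ (s i)) := by
  induction j, hij using Nat.le_induction with
  | base => ring
  | succ k hik ih =>
    obtain ⟨p, hp⟩ : ∃ p, s (k + 1) = p + 1 := ⟨s (k + 1) - 1, by have := hb.lt_succ k; omega⟩
    have hkp : s k ≤ p := by have := hb.lt_succ k (by omega); omega
    have hp1 : 1 ≤ p := by have := hb.lt_of_lt (a := 0) (b := k) (by omega) (by omega); omega
    have hblock := hb.eq_add_of_mem (by omega) hkp (by omega) (1 - z1)
    have hstep := hrun.step p
    rw [← hp] at hstep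
    have hcross := hstep.other_clock_eq hnrt (hrun.clock_nonneg p z1)
      (sub_pos.mpr (hrun.time_lt hp1 (by omega))) (hb.reset (k + 1) (by omega))
    rw [hcross, hblock, ih (by omega)]
    ring

theorem OneResetBlocks.step_skip_loop (hnrt : M.IsNrt) {C : ℕ}
    (hC : ∀ t ∈ M.trans, t.2.1.maxConst ≤ 2 * C) (hrun : IsParamRun M μ π τ q v)
    (hb : OneResetBlocks τ v z1 n s)
    (hagree : ∀ i ≤ n, ∀ j ≤ n, Agree C μ (v (s i)) (v (s j)))
    {i j : ℕ} (hi : 1 ≤ i) (hij : i < j) (hj : j ≤ n) (hq : q (s i) = q (s j)) :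
    M.Step μ (q (s i - 1)) (v (s i - 1)) (π (s i)) (τ (s j) - τ (s i - 1)) (q (s j))
      (v (s j)) := by
  have hsi : 1 ≤ s i := by have := hb.lt_of_lt (a := 0) (b := i) (by omega) (by omega); omega
  have hp : s i - 1 + 1 = s i := by omega
  have hstep := hrun.step (s i - 1)
  have hδ := hrun.delay_pos_or_eq_zero (s i - 1)
  rw [hp, hq] at hstep
  rw [hp] at hδ
  refine hstep.redirect hnrt hC (hrun.clock_nonneg _) hδ (hb.reset i (by omega))
    (hb.reset j hj) ?_ ?_ (hagree i (by omega) j hj)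
  · linarith [hrun.time_lt hsi (hb.lt_of_lt hij (by omega))]
  · rw [hb.other_clock_eq hnrt hrun hi hij.le hj]
    ring

end TwoClocks
/-- The block starts left after deleting the positions `[s i, s (i + m)) = [s i, s i + D)`,
renumbered. -/
def cutBlocks (s : ℕ → ℕ) (i m D k : ℕ) : ℕ :=
  if k < i then s k else s (k + m) - D

theorem skipIndex_le_add {p D t n : ℕ} (h : t ≤ n) : skipIndex p D t ≤ n + D := by
  unfold skipIndex; split_ifs <;> omega

namespace OneResetBlocks

variable {X : Type} {τ : ℕ → ℝ} {v : ℕ → X → ℝ} {z1 : X} {n m i D : ℕ} {s : ℕ → ℕ}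

theorem cutBlocks_of_le (hD : s i + D = s (i + m)) {k : ℕ} (hk : k ≤ i) :
    cutBlocks s i m D k = s k := by
  unfold cutBlocks
  split_ifs with h
  · rfl
  · obtain rfl : k = i := by omega
    omega

theorem cutBlocks_add (hb : OneResetBlocks τ v z1 (n + m) s) (hD : s i + D = s (i + m))
    {k : ℕ} (hik : i ≤ k) (hk : k ≤ n + 1) : cutBlocks s i m D k + D = s (k + m) := by
  have := hb.le_of_le (Nat.add_le_add_right hik m) (by omega)
  rw [cutBlocks, if_neg (by omega)]
  omega

theorem le_cutBlocks (hb : OneResetBlocks τ v z1 (n + m) s) (hD : s i + D = s (i + m))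
    {k : ℕ} (hik : i ≤ k) (hk : k ≤ n + 1) : s i ≤ cutBlocks s i m D k := by
  have := hb.le_of_le (Nat.add_le_add_right hik m) (by omega)
  have := hb.cutBlocks_add hD hik hk
  omega

theorem skipIndex_cutBlocks (hb : OneResetBlocks τ v z1 (n + m) s) (hD : s i + D = s (i + m))
    (hi : i ≤ n) {k : ℕ} (hk : k ≤ n + 1) :
    skipIndex (s i) D (cutBlocks s i m D k) = s (skipIndex i m k) := by
  rcases lt_or_ge k i with hki | hik
  · rw [cutBlocks_of_le hD hki.le, skipIndex_of_lt hki,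
      skipIndex_of_lt (hb.lt_of_lt hki (by omega))]
  · rw [skipIndex_of_le (hb.le_cutBlocks hD hik hk), hb.cutBlocks_add hD hik hk,
      skipIndex_of_le hik]

theorem cut (hb : OneResetBlocks τ v z1 (n + m) s) (hD : s i + D = s (i + m)) (hi : i ≤ n) :
    OneResetBlocks (τ ∘ skipIndex (s i) D) (v ∘ skipIndex (s i) D) z1 n
      (cutBlocks s i m D) where
  lt_succ k hk := by
    rcases lt_or_ge k i with hki | hik
    · rw [cutBlocks_of_le hD hki.le, cutBlocks_of_le hD hki]
      exact hb.lt_succ k (by omega)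
    · have h1 := hb.cutBlocks_add hD hik (by omega)
      have h2 := hb.cutBlocks_add hD (k := k + 1) (by omega) (by omega)
      have := hb.lt_succ (k + m) (by omega)
      rw [Nat.add_right_comm] at h2
      omega
  reset k hk := by
    simp only [Function.comp_apply, hb.skipIndex_cutBlocks hD hi (by omega : k ≤ n + 1)]
    exact hb.reset _ (skipIndex_le_add hk)
  elapse k hk t ht ht' z := by
    simp only [Function.comp_apply]
    rcases lt_or_ge k i with hki | hik
    · rw [cutBlocks_of_le hD hki.le] at ht
      rw [cutBlocks_of_le hD hki] at ht'
      have := hb.le_of_le hki (by omega)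
      rw [skipIndex_of_lt (by omega), skipIndex_of_lt (by omega)]
      exact hb.elapse k (by omega) t ht ht' z
    · have h1 := hb.cutBlocks_add hD hik (by omega)
      have h2 := hb.cutBlocks_add hD (k := k + 1) (by omega) (by omega)
      have := hb.le_cutBlocks hD hik (by omega)
      rw [Nat.add_right_comm] at h2
      rw [skipIndex_of_le (by omega), skipIndex_of_le (by omega), Nat.add_right_comm t 1]
      exact hb.elapse (k + m) (by omega) (t + D) (by omega) (by omega) z

end OneResetBlocks

theorem Fintype.exists_lt_le_card_map_eq {β : Type} [Fintype β] (f : ℕ → β) :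
    ∃ a b, a < b ∧ b ≤ Fintype.card β ∧ f a = f b := by
  obtain ⟨x, y, hxy, hf⟩ :=
    Fintype.exists_ne_map_eq_of_card_lt (fun k : Fin (Fintype.card β + 1) => f k) (by simp)
  rcases lt_or_gt_of_ne (Fin.val_ne_of_ne hxy) with h | h
  · exact ⟨x, y, h, Nat.lt_succ_iff.mp y.2, hf⟩
  · exact ⟨y, x, h, Nat.lt_succ_iff.mp x.2, hf.symm⟩

section Shortening

variable {Q A : Type} [Fintype Q] {M : PTA Q A (Fin 2)} {μ : ℝ} {z1 : Fin 2} {C : ℕ}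

theorem OneResetBlocks.exists_shortening (hnrt : M.IsNrt)
    (hC : ∀ t ∈ M.trans, t.2.1.maxConst ≤ 2 * C) {n : ℕ} {π : ℕ → A} {τ : ℕ → ℝ}
    {q : ℕ → Q} {v : ℕ → Fin 2 → ℝ} {s : ℕ → ℕ} (hrun : IsParamRun M μ π τ q v)
    (hb : OneResetBlocks τ v z1 n s)
    (hagree : ∀ i ≤ n, ∀ j ≤ n, Agree C μ (v (s i)) (v (s j))) :
    ∃ n' ≤ Fintype.card Q, ∃ (π' : ℕ → A) (τ' : ℕ → ℝ) (q' : ℕ → Q) (v' : ℕ → Fin 2 → ℝ)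
      (s' : ℕ → ℕ) (D : ℕ), IsParamRun M μ π' τ' q' v' ∧
      (∀ t ≤ s 0, q' t = q t ∧ v' t = v t) ∧ s' 0 = s 0 ∧ OneResetBlocks τ' v' z1 n' s' ∧
      s' (n' + 1) + D = s (n + 1) ∧ ∀ t, s (n + 1) ≤ t → q' (t - D) = q t ∧ v' (t - D) = v t := by
  induction n using Nat.strong_induction_on generalizing π τ q v s with
  | _ n ih =>
  by_cases hn : n ≤ Fintype.card Q
  · exact ⟨n, hn, π, τ, q, v, s, 0, hrun, fun _ _ => ⟨rfl, rfl⟩, rfl, hb, rfl,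
      fun _ _ => ⟨rfl, rfl⟩⟩
  obtain ⟨a, b, hab, hbQ, hq⟩ := Fintype.exists_lt_le_card_map_eq fun k => q (s (k + 1))
  obtain ⟨n₁, m, hm, rfl, rfl⟩ : ∃ n₁ m, 0 < m ∧ n = n₁ + m ∧ b = a + m :=
    ⟨n - (b - a), b - a, by omega, by omega, by omega⟩
  have hsi : s 0 < s (a + 1) := hb.lt_of_lt (Nat.succ_pos a) (by omega)
  obtain ⟨D, hD⟩ : ∃ D, s (a + 1) + D = s (a + 1 + m) :=
    Nat.le.dest (hb.le_of_le (Nat.le_add_right (a + 1) m) (by omega))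
  have hrun₁ := hrun.skip (c := s (a + 1)) (D := D) (by omega) <| hD ▸
    hb.step_skip_loop hnrt hC hrun hagree (Nat.le_add_left 1 a) (by omega) (by omega)
      (by rw [Nat.add_right_comm]; exact hq)
  have hagree₁ : ∀ k ≤ n₁, ∀ l ≤ n₁, Agree C μ ((v ∘ skipIndex (s (a + 1)) D)
      (cutBlocks s (a + 1) m D k)) ((v ∘ skipIndex (s (a + 1)) D) (cutBlocks s (a + 1) m D l)) :=
    fun k hk l hl => by
      simp only [Function.comp_apply, hb.skipIndex_cutBlocks hD (by omega : a + 1 ≤ n₁)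
        (by omega : k ≤ n₁ + 1), hb.skipIndex_cutBlocks hD (by omega : a + 1 ≤ n₁)
        (by omega : l ≤ n₁ + 1)]
      exact hagree _ (skipIndex_le_add hk) _ (skipIndex_le_add hl)
  obtain ⟨n', hn', π', τ', q', v', s', D', hrun', hpre, hs0, hb', hend, hsuf⟩ :=
    ih n₁ (by omega) hrun₁ (hb.cut hD (by omega)) hagree₁
  have hcut0 := cutBlocks_of_le (m := m) hD (Nat.zero_le (a + 1))
  have hcutEnd := hb.cutBlocks_add hD (by omega : a + 1 ≤ n₁ + 1) le_rfl
  have hcutLe := hb.le_cutBlocks hD (by omega : a + 1 ≤ n₁ + 1) le_rfl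
  rw [Nat.add_right_comm] at hcutEnd
  refine ⟨n', hn', π', τ', q', v', s', D' + D, hrun', fun t ht => ?_, hs0.trans hcut0, hb',
    by omega, fun t ht => ?_⟩
  · simpa only [Function.comp_apply, skipIndex_of_lt (ht.trans_lt hsi)] using
      hpre t (hcut0 ▸ ht)
  · have h := hsuf (t - D) (by omega)
    rwa [Function.comp_apply, Function.comp_apply, skipIndex_of_le (by omega),
      Nat.sub_add_cancel (by omega), Nat.sub_sub, Nat.add_comm D D'] at h

end Shortening

/-- Lemma (shortening): let `ρ = ρ_pref ρ_0 … ρ_n ρ_suff` be a parametric run of a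
2-clock one-parameter nrtTA, where block `ρ_i` spans positions `[s i, s (i+1))`,
each `ρ_i` is a one-reset sequence for clock `z1` (clock `z1` is `0` at its first
position, and no clock is reset inside the block), and the initial valuations of all
blocks are pairwise in agreement.  Then there is a run `ρ_pref ρ'_0 … ρ'_{n'} ρ_suff`
of the automaton (over some timed word, with the same parameter value) with
`n' ≤ |Q|`, whose middle blocks are again one-reset sequences for `z1`, and whose
prefix and suffix configurations coincide with those of `ρ` (the suffix shifted by
the number `D` of removed positions). -/
theorem run_shortening
    (M : ConcretePTA 2) (hnrt : M.toPTA.IsNrt)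
    (μ : ℝ) (π : ℕ → Fin (M.nA + 1)) (τ : ℕ → ℝ)
    (q : ℕ → Fin (M.nQ + 1)) (v : ℕ → Fin 2 → ℝ)
    (hrun : IsParamRun M.toPTA μ π τ q v)
    (z1 : Fin 2) (n : ℕ) (s : ℕ → ℕ)
    (hmono : ∀ i, i ≤ n → s i < s (i + 1))
    (hreset : ∀ i, i ≤ n → v (s i) z1 = 0)
    (hnoreset : ∀ i, i ≤ n → ∀ j, s i ≤ j → j + 1 < s (i + 1) →
      ∀ z, v (j + 1) z = v j z + (τ (j + 1) - τ j))
    (hagree : ∀ i, i ≤ n → ∀ j, j ≤ n → Agree M.maxConstant μ (v (s i)) (v (s j))) :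
    ∃ n' : ℕ, n' ≤ M.nQ + 1 ∧
      ∃ (π' : ℕ → Fin (M.nA + 1)) (τ' : ℕ → ℝ)
        (q' : ℕ → Fin (M.nQ + 1)) (v' : ℕ → Fin 2 → ℝ)
        (s' : ℕ → ℕ) (D : ℕ),
        IsParamRun M.toPTA μ π' τ' q' v' ∧
        -- the prefix `ρ_pref` (up to the start of `ρ_0`) is unchanged
        (∀ j, j ≤ s 0 → q' j = q j ∧ ∀ z, v' j z = v j z) ∧
        -- the middle consists of blocks `ρ'_0 … ρ'_{n'}`, one-reset sequences for `z1`
        s' 0 = s 0 ∧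
        (∀ i, i ≤ n' → s' i < s' (i + 1)) ∧
        s' (n' + 1) + D = s (n + 1) ∧
        (∀ i, i ≤ n' → v' (s' i) z1 = 0) ∧
        (∀ i, i ≤ n' → ∀ j, s' i ≤ j → j + 1 < s' (i + 1) →
          ∀ z, v' (j + 1) z = v' j z + (τ' (j + 1) - τ' j)) ∧
        -- the suffix `ρ_suff` (from `s (n+1)` on) is unchanged, shifted left by `D`
        (∀ j, s (n + 1) ≤ j → q' (j - D) = q j ∧ ∀ z, v' (j - D) z = v j z) := by
  have hC : ∀ t ∈ M.toPTA.trans, t.2.1.maxConst ≤ 2 * M.maxConstant := fun t ht =>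
    (M.maxConst_le_maxConstant ht).trans (Nat.le_mul_of_pos_left _ two_pos)
  obtain ⟨n', hn', π', τ', q', v', s', D, hrun', hpre, hs0, hb', hend, hsuf⟩ :=
    OneResetBlocks.exists_shortening hnrt hC hrun ⟨hmono, hreset, hnoreset⟩ hagree
  refine ⟨n', by simpa using hn', π', τ', q', v', s', D, hrun', fun j hj => ?_, hs0,
    hb'.lt_succ, hend, hb'.reset, hb'.elapse, fun j hj => ?_⟩
  · obtain ⟨hq, hv⟩ := hpre j hj
    exact ⟨hq, congrFun hv⟩
  · obtain ⟨hq, hv⟩ := hsuf j hj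
    exact ⟨hq, congrFun hv⟩
end

section
/- Let μ̄ ∈ ℝ>0 with m = ⌊μ̄⌋ and let C ∈ ℕ. Let v be a clock valuation over X = {x, y} such that v(z1) = 0 for some z1 ∈ X and z20 < v(z2) < z20 + 1 for the other clock z2, for some z20 ∈ ℕ with z20 < 2C. Then for every δ ∈ ℝ>0, if v' = v + δ is a critical valuation, then there exists c ∈ ℕ such that v' satisfies at least one of: (1) v'(z1) = c and m = c + z20; (2) v'(z2) = c and m = c − z20 − 1; (3) c − 1 < v'(z1) < c and m = c + z20; (4) c − 1 < v'(z2) < c and m = c − z20 − 1; (5) c < v'(z1) < c + 1 and m = c + z20; (6) c < v'(z2) < c + 1 and m = c − z20 − 1. -/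
/-- Proposition on critical valuations: let `v` be a valuation over clocks `{z1, z2}`
with `v z1 = 0` and `z20 < v z2 < z20 + 1` (`z20 < 2C`).  For every delay `δ > 0`, if
`v + δ` is a critical valuation (some clock lies strictly between `m = ⌊μ̄⌋` and `m+1`),
then `v + δ` satisfies one of the six listed combinations of constraints for some
`c ∈ ℕ`. -/
theorem critical_valuation_cases
    (μ : ℝ) (hμ : 0 < μ) (C : ℕ)
    (v : Fin 2 → ℝ) (hnn : ∀ z, 0 ≤ v z)
    (z1 z2 : Fin 2) (hz : z1 ≠ z2)
    (z20 : ℕ) (hz20 : z20 < 2 * C)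
    (h1 : v z1 = 0) (h2l : (z20 : ℝ) < v z2) (h2r : v z2 < (z20 : ℝ) + 1)
    (δ : ℝ) (hδ : 0 < δ)
    (hcrit : ((⌊μ⌋ : ℝ) < v z1 + δ ∧ v z1 + δ < (⌊μ⌋ : ℝ) + 1) ∨
             ((⌊μ⌋ : ℝ) < v z2 + δ ∧ v z2 + δ < (⌊μ⌋ : ℝ) + 1)) :
    ∃ c : ℕ,
      (v z1 + δ = (c : ℝ) ∧ ⌊μ⌋ = (c : ℤ) + (z20 : ℤ)) ∨
      (v z2 + δ = (c : ℝ) ∧ ⌊μ⌋ = (c : ℤ) - (z20 : ℤ) - 1) ∨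
      (((c : ℝ) - 1 < v z1 + δ ∧ v z1 + δ < (c : ℝ)) ∧ ⌊μ⌋ = (c : ℤ) + (z20 : ℤ)) ∨
      (((c : ℝ) - 1 < v z2 + δ ∧ v z2 + δ < (c : ℝ)) ∧ ⌊μ⌋ = (c : ℤ) - (z20 : ℤ) - 1) ∨
      (((c : ℝ) < v z1 + δ ∧ v z1 + δ < (c : ℝ) + 1) ∧ ⌊μ⌋ = (c : ℤ) + (z20 : ℤ)) ∨
      (((c : ℝ) < v z2 + δ ∧ v z2 + δ < (c : ℝ) + 1) ∧ ⌊μ⌋ = (c : ℤ) - (z20 : ℤ) - 1) := by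

  have hm0 : 0 ≤ ⌊μ⌋ := Int.floor_nonneg.mpr hμ.le
  rcases hcrit with ⟨ha, hb⟩ | ⟨ha, hb⟩
  · -- z1 critical: δ ∈ (m, m+1); use c = m + z20 + 1 with z2
    rw [h1, zero_add] at ha hb
    refine ⟨⌊μ⌋.toNat + z20 + 1, ?_⟩
    have hc : ((⌊μ⌋.toNat + z20 + 1 : ℕ) : ℤ) = ⌊μ⌋ + z20 + 1 := by
      push_cast [Int.toNat_of_nonneg hm0]; ring
    have hm : ⌊μ⌋ = ((⌊μ⌋.toNat + z20 + 1 : ℕ) : ℤ) - z20 - 1 := by omega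
    have hcr : ((⌊μ⌋.toNat + z20 + 1 : ℕ) : ℝ) = (⌊μ⌋ : ℝ) + z20 + 1 := by
      exact_mod_cast congrArg (fun n : ℤ => (n : ℝ)) hc
    have hlo : ((⌊μ⌋.toNat + z20 + 1 : ℕ) : ℝ) - 1 < v z2 + δ := by
      rw [hcr]; linarith
    have hhi : v z2 + δ < ((⌊μ⌋.toNat + z20 + 1 : ℕ) : ℝ) + 1 := by
      rw [hcr]; linarith
    rcases lt_trichotomy (v z2 + δ) ((⌊μ⌋.toNat + z20 + 1 : ℕ) : ℝ) with h | h | h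
    · exact Or.inr (Or.inr (Or.inr (Or.inl ⟨⟨hlo, h⟩, hm⟩)))
    · exact Or.inr (Or.inl ⟨h, hm⟩)
    · exact Or.inr (Or.inr (Or.inr (Or.inr (Or.inr ⟨⟨h, hhi⟩, hm⟩))))
  · -- z2 critical: use c = m - z20 with z1
    have hz20m : (z20 : ℤ) ≤ ⌊μ⌋ := by
      have : (z20 : ℝ) < (⌊μ⌋ : ℝ) + 1 := by linarith
      have : (z20 : ℤ) < ⌊μ⌋ + 1 := by exact_mod_cast this
      omega
    refine ⟨(⌊μ⌋ - z20).toNat, ?_⟩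
    have hc : (((⌊μ⌋ - z20).toNat : ℕ) : ℤ) = ⌊μ⌋ - z20 := Int.toNat_of_nonneg (by omega)
    have hm : ⌊μ⌋ = (((⌊μ⌋ - z20).toNat : ℕ) : ℤ) + z20 := by omega
    have hcr : (((⌊μ⌋ - z20).toNat : ℕ) : ℝ) = (⌊μ⌋ : ℝ) - z20 := by
      exact_mod_cast congrArg (fun n : ℤ => (n : ℝ)) hc
    rw [h1, zero_add]
    have hlo : (((⌊μ⌋ - z20).toNat : ℕ) : ℝ) - 1 < δ := by rw [hcr]; linarith
    have hhi : δ < (((⌊μ⌋ - z20).toNat : ℕ) : ℝ) + 1 := by rw [hcr]; linarith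
    rcases lt_trichotomy δ (((⌊μ⌋ - z20).toNat : ℕ) : ℝ) with h | h | h
    · exact Or.inr (Or.inr (Or.inl ⟨⟨hlo, h⟩, hm⟩))
    · exact Or.inl ⟨h, hm⟩
    · exact Or.inr (Or.inr (Or.inr (Or.inr (Or.inl ⟨⟨h, hhi⟩, hm⟩))))
end

section
/- Let C ∈ ℕ and X = {x, y}. Let I(μ) = μ̄ be a parameter interpretation with 0 < frac(μ̄) and frac(μ̄) ≠ 1/2, and let ξ = v_0 v_1 ... be a (possibly infinite) one-reset sequence of clock valuations. For every interpretation Î(μ) = μ̂ with ⌊μ̂⌋ = ⌊μ̄⌋ and the same polarity as μ̄, and for every valuation v̂_0 that is in complete agreement with v_0 (with respect to μ̄, μ̂ and C), there exists a one-reset sequence of valuations ξ̂ = v̂_0 v̂_1 ... (of the same length, starting from v̂_0) such that for every position i ≥ 1 in the sequence, v_i and v̂_i are in agreement for interpretations I, Î. -/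
/-- `ℓ_μ = min(frac μ, 1 - frac μ)`. -/
noncomputable def ellVal (μ : ℝ) : ℝ := min (Int.fract μ) (1 - Int.fract μ)

/-- The `k`-th of the six intervals associated with a parameter value `μ`:
`{0}, (0, ℓ_μ), {ℓ_μ}, (ℓ_μ, 1 - ℓ_μ), {1 - ℓ_μ}, (1 - ℓ_μ, 1)`. -/
def inInterval (μ : ℝ) (k : ℕ) (r : ℝ) : Prop :=
  match k with
  | 0 => r = 0
  | 1 => 0 < r ∧ r < ellVal μ
  | 2 => r = ellVal μ
  | 3 => ellVal μ < r ∧ r < 1 - ellVal μ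
  | 4 => r = 1 - ellVal μ
  | 5 => 1 - ellVal μ < r ∧ r < 1
  | _ => False

/-- Valuations `v, w` over two clocks are in agreement for interpretations `μ₁, μ₂`
(w.r.t. constant `C`): they satisfy the same constraints `z ∼ c` (`c ≤ 2C`) and
`z ∼ μ₁` resp. `z ∼ μ₂`, for `∼ ∈ {<, =}`. -/
def Agree2 (C : ℕ) (μ₁ μ₂ : ℝ) (v w : Fin 2 → ℝ) : Prop :=
  ∀ z : Fin 2,
    (∀ c : ℕ, c ≤ 2 * C →
      ((v z < (c : ℝ) ↔ w z < (c : ℝ)) ∧ (v z = (c : ℝ) ↔ w z = (c : ℝ)))) ∧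
    (v z < μ₁ ↔ w z < μ₂) ∧ (v z = μ₁ ↔ w z = μ₂)

/-- Complete agreement: agreement, both valuations bounded by `2C`, and for each clock
the fractional parts lie in corresponding intervals associated with `μ₁`, `μ₂`. -/
def CompleteAgree (C : ℕ) (μ₁ μ₂ : ℝ) (v w : Fin 2 → ℝ) : Prop :=
  Agree2 C μ₁ μ₂ v w ∧
  ∀ z : Fin 2, v z ≤ 2 * C ∧ w z ≤ 2 * C ∧
    ∀ k : ℕ, inInterval μ₁ k (Int.fract (v z)) ↔ inInterval μ₂ k (Int.fract (w z))

/-! Along a one-reset sequence every valuation is `v 0 + d` for a single elapsed time `d`, since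
some clock starts at `0`. So it suffices to transport elapsed times by a strictly monotone `F`
with `F 0 = 0`: agreement at time `d` only asks that `d` compare with the finitely many
thresholds `c - v 0 z`, `μ₁ - v 0 z` as `F d` compares with `c - w 0 z`, `μ₂ - w 0 z`, and a
piecewise-linear interpolation sends the first thresholds to the second ones as soon as the two
families are ordered alike. Comparing two thresholds amounts to comparing a difference of initial
clock values with a point of `ℤ ∪ (ℤ ± μ)`. Complete agreement gives exactly what is needed:
equal integer parts and fractional parts in corresponding intervals cut out by
`0, ℓ_μ, 1 - ℓ_μ`, which the polarity assumption identifies with `0, frac μ, 1 - frac μ`. -/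

section PiecewiseLinear

variable {K : Type*} [Field K] [LinearOrder K]

def piecewiseLinear (f : K → K) : List K → K → K
  | [], t => t
  | [a], t => t - a + f a
  | a :: b :: l, t =>
      if t < b then f a + (t - a) * ((f b - f a) / (b - a)) else piecewiseLinear f (b :: l) t

theorem piecewiseLinear_apply_of_mem (f : K → K) {l : List K} (hl : l.IsChain (· < ·))
    {x : K} (hx : x ∈ l) : piecewiseLinear f l x = f x := by
  induction l with
  | nil => simp at hx
  | cons a l ih =>
    rcases l with _ | ⟨b, l⟩
    · obtain rfl : x = a := by simpa using hx
      simp [piecewiseLinear]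
    · obtain ⟨hab, hl⟩ := List.isChain_cons_cons.mp hl
      rcases List.mem_cons.mp hx with rfl | hx
      · simp [piecewiseLinear, hab]
      · have hbx : b ≤ x := by
          rcases List.mem_cons.mp hx with rfl | hx
          · exact le_rfl
          · exact (List.rel_of_pairwise_cons (List.isChain_iff_pairwise.mp hl) hx).le
        simp only [piecewiseLinear, if_neg hbx.not_gt]
        exact ih hl hx

theorem strictMono_piecewiseLinear [IsStrictOrderedRing K] {f : K → K} {l : List K}
    (hl : l.IsChain (· < ·)) (hf : StrictMonoOn f {x | x ∈ l}) :
    StrictMono (piecewiseLinear f l) := by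
  induction l with
  | nil => exact fun _ _ h => h
  | cons a l ih =>
    rcases l with _ | ⟨b, l⟩
    · exact fun x y h => by simp only [piecewiseLinear]; linarith
    · obtain ⟨hab, hl⟩ := List.isChain_cons_cons.mp hl
      have hfab : f a < f b := hf (by simp) (by simp) hab
      have htail := ih hl (hf.mono fun x hx => List.mem_cons_of_mem a hx)
      have hslope : 0 < (f b - f a) / (b - a) := div_pos (by linarith) (by linarith)
      have hseg : ∀ t, f a + (t - a) * ((f b - f a) / (b - a)) =
          f b + (t - b) * ((f b - f a) / (b - a)) := by
        intro t; field_simp; ring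
      have hb : piecewiseLinear f (b :: l) b = f b := piecewiseLinear_apply_of_mem f hl (by simp)
      intro x y hxy
      simp only [piecewiseLinear]
      split_ifs with hx hy hy
      · nlinarith
      · have : f b ≤ piecewiseLinear f (b :: l) y := hb ▸ htail.monotone (not_lt.mp hy)
        rw [hseg]; nlinarith
      · linarith
      · exact htail hxy

theorem StrictMonoOn.exists_strictMono_eqOn [IsStrictOrderedRing K] {f : K → K} {s : Set K}
    (hs : s.Finite) (hf : StrictMonoOn f s) : ∃ F : K → K, StrictMono F ∧ Set.EqOn F f s := by
  have hl : hs.toFinset.sort.IsChain (· < ·) :=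
    List.sortedLT_iff_isChain.mp (Finset.sortedLT_sort _)
  have hmem : ∀ {x}, x ∈ hs.toFinset.sort ↔ x ∈ s := by simp
  refine ⟨piecewiseLinear f hs.toFinset.sort, strictMono_piecewiseLinear hl ?_, ?_⟩
  · exact hf.mono fun x hx => hmem.mp hx
  · exact fun x hx => piecewiseLinear_apply_of_mem f hl (hmem.mpr hx)

theorem exists_strictMono_apply_eq_of_cmp_eq [IsStrictOrderedRing K] {ι : Type*} [Finite ι]
    {a b : ι → K} (h : ∀ i j, cmp (a i) (a j) = cmp (b i) (b j)) :
    ∃ F : K → K, StrictMono F ∧ ∀ i, F (a i) = b i := by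
  have hb : b.FactorsThrough a := fun i j hij => (eq_iff_eq_of_cmp_eq_cmp (h i j)).mp hij
  have hmono : StrictMonoOn (Function.extend a b id) (Set.range a) := by
    rintro _ ⟨i, rfl⟩ _ ⟨j, rfl⟩ hij
    rw [hb.extend_apply, hb.extend_apply]
    exact (lt_iff_lt_of_cmp_eq_cmp (h i j)).mp hij
  obtain ⟨F, hF, hFa⟩ := hmono.exists_strictMono_eqOn (Set.finite_range a)
  exact ⟨F, hF, fun i => (hFa ⟨i, rfl⟩).trans (hb.extend_apply id i)⟩

end PiecewiseLinear

theorem cmp_eq_cmp_iff {α : Type*} [LinearOrder α] {x y x' y' : α} :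
    cmp x y = cmp x' y' ↔ (x < y ↔ x' < y') ∧ (x = y ↔ x' = y') := by
  refine ⟨fun h => ⟨lt_iff_lt_of_cmp_eq_cmp h, eq_iff_eq_of_cmp_eq_cmp h⟩, fun ⟨hlt, heq⟩ => ?_⟩
  rcases lt_trichotomy x y with h | h | h
  · rw [h.cmp_eq_lt, (hlt.mp h).cmp_eq_lt]
  · rw [h.cmp_eq_eq, (heq.mp h).cmp_eq_eq]
  · have h' : y' < x' := lt_of_le_of_ne (not_lt.mp fun h' => h.not_gt (hlt.mpr h'))
      fun h' => h.ne' (heq.mpr h'.symm)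
    rw [h.cmp_eq_gt, h'.cmp_eq_gt]

theorem cmp_eq_cmp_of_sub_eq {α : Type*} [AddGroup α] [LinearOrder α] [AddRightMono α]
    {x y x' y' : α} (h : x - y = x' - y') : cmp x y = cmp x' y' := by
  rw [← cmp_sub_zero, h, cmp_sub_zero]

section FloorRing

variable {K : Type*} [CommRing K] [LinearOrder K] [IsStrictOrderedRing K] [FloorRing K]

theorem cmp_intCast_add_eq_then {a : K} (ha₀ : 0 ≤ a) (ha₁ : a < 1) (u : K) (n : ℤ) :
    cmp u (n + a) = (cmp ⌊u⌋ n).then (cmp (Int.fract u) a) := by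
  rcases lt_trichotomy ⌊u⌋ n with h | rfl | h
  · have h1 : (⌊u⌋ : K) + 1 ≤ n := by exact_mod_cast h
    have : u < n + a := by linarith [Int.lt_floor_add_one u]
    rw [this.cmp_eq_lt, h.cmp_eq_lt]; rfl
  · rw [cmp_self_eq_eq, cmp_eq_cmp_of_sub_eq (x' := Int.fract u) (y' := a)
      (by rw [Int.fract]; ring)]
    rfl
  · have h1 : (n : K) + 1 ≤ ⌊u⌋ := by exact_mod_cast h
    have : n + a < u := by linarith [Int.floor_le u]
    rw [this.cmp_eq_gt, h.cmp_eq_gt]; rfl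

theorem floor_le_floor_of_forall_lt_natCast {u₁ u₂ : K} {M : ℕ} (h₀ : 0 ≤ u₁) (hM : u₁ ≤ M)
    (h : ∀ c : ℕ, c ≤ M → u₂ < c → u₁ < c) : ⌊u₁⌋ ≤ ⌊u₂⌋ := by
  have hc : (⌊u₁⌋₊ : K) ≤ u₂ := not_lt.mp fun hlt =>
    (Nat.floor_le h₀).not_gt (h _ (Nat.floor_le_of_le hM) hlt)
  rw [← Int.natCast_floor_eq_floor h₀]
  exact Int.le_floor.mpr (by exact_mod_cast hc)

end FloorRing

section SamePosition

variable {K : Type*} [CommRing K] [LinearOrder K]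

def SamePosition (μ₁ μ₂ u₁ u₂ : K) : Prop :=
  ∀ n : ℤ, cmp u₁ n = cmp u₂ n ∧ cmp u₁ (n + μ₁) = cmp u₂ (n + μ₂) ∧
    cmp u₁ (n - μ₁) = cmp u₂ (n - μ₂)

/-- The constants a clock is compared with in `Agree2`: `μ`, or a natural number below `n`. -/
def guardConst (μ : K) {n : ℕ} : Option (Fin n) → K
  | none => μ
  | some c => ((c : ℕ) : K)

variable [IsStrictOrderedRing K] {μ₁ μ₂ : K}

theorem samePosition_of_floor_eq [FloorRing K] (hμ : ⌊μ₁⌋ = ⌊μ₂⌋) (hμ₁ : 0 < Int.fract μ₁)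
    (hμ₂ : 0 < Int.fract μ₂) {u₁ u₂ : K} (hu : ⌊u₁⌋ = ⌊u₂⌋)
    (h₀ : cmp (Int.fract u₁) 0 = cmp (Int.fract u₂) 0)
    (hf : cmp (Int.fract u₁) (Int.fract μ₁) = cmp (Int.fract u₂) (Int.fract μ₂))
    (hf' : cmp (Int.fract u₁) (1 - Int.fract μ₁) = cmp (Int.fract u₂) (1 - Int.fract μ₂)) :
    SamePosition μ₁ μ₂ u₁ u₂ := by
  have add_eq : ∀ (μ : K) (n : ℤ), (n : K) + μ = ((n + ⌊μ⌋ : ℤ) : K) + Int.fract μ := by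
    intro μ n; push_cast; rw [add_assoc, Int.floor_add_fract]
  have sub_eq : ∀ (μ : K) (n : ℤ), (n : K) - μ = ((n - ⌊μ⌋ - 1 : ℤ) : K) + (1 - Int.fract μ) := by
    intro μ n; rw [Int.fract]; push_cast; ring
  have hsub : ∀ μ : K, 0 < Int.fract μ → 0 ≤ 1 - Int.fract μ ∧ 1 - Int.fract μ < 1 :=
    fun μ hμ => ⟨by linarith [Int.fract_lt_one μ], by linarith⟩
  intro n
  refine ⟨?_, ?_, ?_⟩
  · rw [← add_zero (n : K), cmp_intCast_add_eq_then le_rfl one_pos,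
      cmp_intCast_add_eq_then le_rfl one_pos, hu, h₀]
  · rw [add_eq μ₁, add_eq μ₂, hμ, cmp_intCast_add_eq_then hμ₁.le (Int.fract_lt_one _),
      cmp_intCast_add_eq_then hμ₂.le (Int.fract_lt_one _), hu, hf]
  · rw [sub_eq μ₁, sub_eq μ₂, hμ, cmp_intCast_add_eq_then (hsub μ₁ hμ₁).1 (hsub μ₁ hμ₁).2,
      cmp_intCast_add_eq_then (hsub μ₂ hμ₂).1 (hsub μ₂ hμ₂).2, hu, hf']

theorem samePosition_zero [FloorRing K] (hμ : ⌊μ₁⌋ = ⌊μ₂⌋) (hμ₁ : 0 < Int.fract μ₁)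
    (hμ₂ : 0 < Int.fract μ₂) : SamePosition μ₁ μ₂ 0 0 := by
  have h₁ : (0 : K) < 1 - Int.fract μ₁ := by linarith [Int.fract_lt_one μ₁]
  have h₂ : (0 : K) < 1 - Int.fract μ₂ := by linarith [Int.fract_lt_one μ₂]
  refine samePosition_of_floor_eq hμ hμ₁ hμ₂ rfl rfl ?_ ?_ <;>
    simp only [Int.fract_zero, hμ₁.cmp_eq_lt, hμ₂.cmp_eq_lt, h₁.cmp_eq_lt, h₂.cmp_eq_lt]

theorem SamePosition.neg {u₁ u₂ : K} (h : SamePosition μ₁ μ₂ u₁ u₂) :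
    SamePosition μ₁ μ₂ (-u₁) (-u₂) := by
  have cmp_neg : ∀ x y : K, cmp (-x) y = cmp (-y) x := fun x y =>
    cmp_eq_cmp_of_sub_eq (by abel)
  intro n
  obtain ⟨h₀, hadd, hsub⟩ := h (-n)
  simp only [cmp_neg _ (n : K), cmp_neg _ ((n : K) + _), cmp_neg _ ((n : K) - _)]
  refine ⟨?_, ?_, ?_⟩
  · simpa using cmp_eq_cmp_symm.mp h₀
  · convert cmp_eq_cmp_symm.mp hsub using 2 <;> push_cast <;> abel
  · convert cmp_eq_cmp_symm.mp hadd using 2 <;> push_cast <;> abel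

theorem samePosition_sub_of_fin_two {v₀ w₀ : Fin 2 → K} {z₀ : Fin 2} (hv : v₀ z₀ = 0)
    (hw : w₀ z₀ = 0) (h : ∀ z, SamePosition μ₁ μ₂ (v₀ z) (w₀ z))
    (hzero : SamePosition μ₁ μ₂ 0 0) (z z' : Fin 2) :
    SamePosition μ₁ μ₂ (v₀ z' - v₀ z) (w₀ z' - w₀ z) := by
  by_cases hzz : z = z'
  · simpa [hzz] using hzero
  · obtain rfl | rfl : z₀ = z ∨ z₀ = z' := by omega
    · simpa [hv, hw] using h z'
    · simpa [hv, hw] using (h z).neg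

theorem SamePosition.cmp_guardConst_sub {n : ℕ} {p₁ p₁' p₂ p₂' : K}
    (h : SamePosition μ₁ μ₂ (p₁' - p₁) (p₂' - p₂)) (o o' : Option (Fin n)) :
    cmp (guardConst μ₁ o - p₁) (guardConst μ₁ o' - p₁') =
      cmp (guardConst μ₂ o - p₂) (guardConst μ₂ o' - p₂') := by
  have shift : ∀ (μ p p' : K), cmp (guardConst μ o - p) (guardConst μ o' - p') =
      cmp (p' - p) (guardConst μ o' - guardConst μ o) :=
    fun _ _ _ => cmp_eq_cmp_of_sub_eq (by abel)
  rw [shift, shift]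
  cases o with
  | none =>
    cases o' with
    | none => simpa [guardConst] using (h 0).1
    | some c' => simpa [guardConst] using (h c').2.2
  | some c =>
    cases o' with
    | none => simpa [guardConst, neg_add_eq_sub] using (h (-c)).2.1
    | some c' => simpa [guardConst] using (h (c' - c)).1

end SamePosition

theorem ellVal_pos {μ : ℝ} (hμ : 0 < Int.fract μ) : 0 < ellVal μ :=
  lt_min hμ (by linarith [Int.fract_lt_one μ])

theorem ellVal_lt_one_sub_ellVal {μ : ℝ} (hμ : Int.fract μ ≠ 1 / 2) :
    ellVal μ < 1 - ellVal μ := by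
  rcases lt_or_gt_of_ne hμ with h | h
  · rw [ellVal, min_eq_left (by linarith)]; linarith
  · rw [ellVal, min_eq_right (by linarith)]; linarith

theorem lt_ellVal_iff {μ r : ℝ} (hμ : 0 < Int.fract μ) (hr : 0 ≤ r) :
    r < ellVal μ ↔ inInterval μ 0 r ∨ inInterval μ 1 r := by
  have := ellVal_pos hμ
  simp only [inInterval]
  grind

theorem lt_one_sub_ellVal_iff {μ r : ℝ} (hμ : 0 < Int.fract μ) (hμ' : Int.fract μ ≠ 1 / 2)
    (hr : 0 ≤ r) : r < 1 - ellVal μ ↔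
      inInterval μ 0 r ∨ inInterval μ 1 r ∨ inInterval μ 2 r ∨ inInterval μ 3 r := by
  have := ellVal_pos hμ
  have := ellVal_lt_one_sub_ellVal hμ'
  simp only [inInterval]
  grind

theorem cmp_eq_cmp_of_inInterval_iff {μ₁ μ₂ r₁ r₂ : ℝ}
    (hμ₁ : 0 < Int.fract μ₁) (hμ₁' : Int.fract μ₁ ≠ 1 / 2)
    (hμ₂ : 0 < Int.fract μ₂) (hμ₂' : Int.fract μ₂ ≠ 1 / 2)
    (hpol : (1 / 2 < Int.fract μ₁ ∧ 1 / 2 < Int.fract μ₂) ∨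
      (Int.fract μ₁ < 1 / 2 ∧ Int.fract μ₂ < 1 / 2))
    (hr₁ : 0 ≤ r₁) (hr₂ : 0 ≤ r₂) (h : ∀ k, inInterval μ₁ k r₁ ↔ inInterval μ₂ k r₂) :
    cmp r₁ 0 = cmp r₂ 0 ∧ cmp r₁ (Int.fract μ₁) = cmp r₂ (Int.fract μ₂) ∧
      cmp r₁ (1 - Int.fract μ₁) = cmp r₂ (1 - Int.fract μ₂) := by
  have h₀ : cmp r₁ 0 = cmp r₂ 0 := cmp_eq_cmp_iff.mpr ⟨by simp [hr₁.not_gt, hr₂.not_gt], h 0⟩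
  have hℓ : cmp r₁ (ellVal μ₁) = cmp r₂ (ellVal μ₂) := cmp_eq_cmp_iff.mpr
    ⟨by rw [lt_ellVal_iff hμ₁ hr₁, lt_ellVal_iff hμ₂ hr₂, h 0, h 1], h 2⟩
  have hℓ' : cmp r₁ (1 - ellVal μ₁) = cmp r₂ (1 - ellVal μ₂) := cmp_eq_cmp_iff.mpr
    ⟨by rw [lt_one_sub_ellVal_iff hμ₁ hμ₁' hr₁, lt_one_sub_ellVal_iff hμ₂ hμ₂' hr₂,
      h 0, h 1, h 2, h 3], h 4⟩
  rcases hpol with ⟨h₁, h₂⟩ | ⟨h₁, h₂⟩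
  · rw [ellVal, ellVal, min_eq_right (by linarith), min_eq_right (by linarith)] at hℓ hℓ'
    simp only [sub_sub_cancel] at hℓ'
    exact ⟨h₀, hℓ', hℓ⟩
  · rw [ellVal, ellVal, min_eq_left (by linarith), min_eq_left (by linarith)] at hℓ hℓ'
    exact ⟨h₀, hℓ, hℓ'⟩

theorem CompleteAgree.samePosition {C : ℕ} {μ₁ μ₂ : ℝ} {v w : Fin 2 → ℝ}
    (h : CompleteAgree C μ₁ μ₂ v w) (hv : ∀ z, 0 ≤ v z) (hw : ∀ z, 0 ≤ w z)
    (hμ₁ : 0 < Int.fract μ₁) (hμ₁' : Int.fract μ₁ ≠ 1 / 2)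
    (hμ₂ : 0 < Int.fract μ₂) (hμ₂' : Int.fract μ₂ ≠ 1 / 2) (hμ : ⌊μ₁⌋ = ⌊μ₂⌋)
    (hpol : (1 / 2 < Int.fract μ₁ ∧ 1 / 2 < Int.fract μ₂) ∨
      (Int.fract μ₁ < 1 / 2 ∧ Int.fract μ₂ < 1 / 2)) (z : Fin 2) :
    SamePosition μ₁ μ₂ (v z) (w z) := by
  obtain ⟨hv₂, hw₂, hI⟩ := h.2 z
  have hlt : ∀ c : ℕ, c ≤ 2 * C → (v z < c ↔ w z < c) := fun c hc => ((h.1 z).1 c hc).1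
  have hfloor : ⌊v z⌋ = ⌊w z⌋ := le_antisymm
    (floor_le_floor_of_forall_lt_natCast (hv z) (by exact_mod_cast hv₂) fun c hc => (hlt c hc).mpr)
    (floor_le_floor_of_forall_lt_natCast (hw z) (by exact_mod_cast hw₂) fun c hc => (hlt c hc).mp)
  obtain ⟨h₀, hf, hf'⟩ := cmp_eq_cmp_of_inInterval_iff hμ₁ hμ₁' hμ₂ hμ₂' hpol
    (Int.fract_nonneg _) (Int.fract_nonneg _) hI
  exact samePosition_of_floor_eq hμ hμ₁ hμ₂ hfloor h₀ hf hf'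

theorem sub_apply_zero_eq_of_step {X α : Type*} [AddCommGroup α] {N : ℕ∞} {v : ℕ → X → α}
    (hstep : ∀ i : ℕ, ((i : ℕ∞) + 1) < N → ∃ δ : α, ∀ z, v (i + 1) z = v i z + δ)
    {i : ℕ} (hi : (i : ℕ∞) < N) (z z' : X) : v i z - v 0 z = v i z' - v 0 z' := by
  induction i with
  | zero => simp
  | succ i ih =>
    have hi' : (i : ℕ∞) + 1 < N := by exact_mod_cast hi
    obtain ⟨δ, hδ⟩ := hstep i hi'
    rw [hδ z, hδ z', add_sub_right_comm, ih (lt_of_le_of_lt le_self_add hi'), add_sub_right_comm]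

theorem agree2_of_strictMono {C : ℕ} {μ₁ μ₂ : ℝ} {v₀ w₀ : Fin 2 → ℝ} {F : ℝ → ℝ}
    (hF : StrictMono F)
    (hpts : ∀ z (o : Option (Fin (2 * C + 1))),
      F (guardConst μ₁ o - v₀ z) = guardConst μ₂ o - w₀ z) (d : ℝ) :
    Agree2 C μ₁ μ₂ (fun z => v₀ z + d) (fun z => w₀ z + F d) := by
  have key : ∀ z (o : Option (Fin (2 * C + 1))),
      cmp (v₀ z + d) (guardConst μ₁ o) = cmp (w₀ z + F d) (guardConst μ₂ o) := by
    intro z o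
    rw [cmp_eq_cmp_of_sub_eq (x' := d) (y' := guardConst μ₁ o - v₀ z) (by abel),
      ← hF.cmp_map_eq, hpts]
    exact cmp_eq_cmp_of_sub_eq (by abel)
  exact fun z => ⟨fun c hc => cmp_eq_cmp_iff.mp (key z (some ⟨c, by omega⟩)),
    cmp_eq_cmp_iff.mp (key z none)⟩

theorem one_reset_sequence_agreement_general
    (C : ℕ) (μ₁ μ₂ : ℝ)
    (hf₁pos : 0 < Int.fract μ₁) (hf₁half : Int.fract μ₁ ≠ 1 / 2)
    (hf₂pos : 0 < Int.fract μ₂) (hf₂half : Int.fract μ₂ ≠ 1 / 2)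
    (hfloor : ⌊μ₂⌋ = ⌊μ₁⌋)
    (hpol : (1 / 2 < Int.fract μ₁ ∧ 1 / 2 < Int.fract μ₂) ∨
            (Int.fract μ₁ < 1 / 2 ∧ Int.fract μ₂ < 1 / 2))
    (N : ℕ∞)
    (v : ℕ → Fin 2 → ℝ) (hnn : ∀ i z, 0 ≤ v i z)
    (h0 : ∃ z, v 0 z = 0)
    (hstep : ∀ i : ℕ, ((i : ℕ∞) + 1) < N →
      ∃ δ : ℝ, 0 < δ ∧ ∀ z, v (i + 1) z = v i z + δ)
    (w0 : Fin 2 → ℝ) (hw0nn : ∀ z, 0 ≤ w0 z)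
    (hca : CompleteAgree C μ₁ μ₂ (v 0) w0) :
    ∃ w : ℕ → Fin 2 → ℝ, w 0 = w0 ∧
      (∀ i : ℕ, ((i : ℕ∞) + 1) < N →
        ∃ δ : ℝ, 0 < δ ∧ ∀ z, w (i + 1) z = w i z + δ) ∧
      (∀ i : ℕ, 1 ≤ i → (i : ℕ∞) < N → Agree2 C μ₁ μ₂ (v i) (w i)) := by
  obtain ⟨z₀, hz₀⟩ := h0
  have hw₀ : w0 z₀ = 0 := by
    simpa using ((hca.1 z₀).1 0 (Nat.zero_le _)).2.mp (by simpa using hz₀)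
  have hpos := hca.samePosition (hnn 0) hw0nn hf₁pos hf₁half hf₂pos hf₂half hfloor.symm hpol
  have hzero := samePosition_zero hfloor.symm hf₁pos hf₂pos
  obtain ⟨F, hF, hFpts⟩ := exists_strictMono_apply_eq_of_cmp_eq
    (a := fun p : Fin 2 × Option (Fin (2 * C + 1)) => guardConst μ₁ p.2 - v 0 p.1)
    (b := fun p => guardConst μ₂ p.2 - w0 p.1) fun p q =>
      (samePosition_sub_of_fin_two hz₀ hw₀ hpos hzero p.1 q.1).cmp_guardConst_sub p.2 q.2
  have hF₀ : F 0 = 0 := by simpa [guardConst, hz₀, hw₀] using hFpts (z₀, some 0)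
  refine ⟨fun i z => w0 z + F (v i z₀), by simp [hz₀, hF₀], fun i hi => ?_, fun i _ hi => ?_⟩
  · obtain ⟨δ, hδ, hv⟩ := hstep i hi
    exact ⟨F (v (i + 1) z₀) - F (v i z₀), sub_pos.mpr (hF (by rw [hv]; linarith)),
      fun z => by ring⟩
  · have hvi : v i = fun z => v 0 z + v i z₀ := funext fun z => by
      linarith [sub_apply_zero_eq_of_step (fun j hj => (hstep j hj).imp fun _ h => h.2) hi z z₀]
    rw [hvi]
    exact agree2_of_strictMono hF (fun z o => hFpts (z, o)) _

/-- Lemma (agreement): let `μ₁` be a parameter value and `v` a (possibly infinite, of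
length `N ∈ ℕ∞`) one-reset sequence of valuations.  For every parameter value `μ₂`
with the same integer part and the same polarity as `μ₁`, and every valuation `w0` in
complete agreement with `v 0`, there is a one-reset sequence `w` of the same length
starting at `w0` such that for every position `i ≥ 1` of the sequence, `v i` and
`w i` are in agreement for interpretations `μ₁, μ₂`. -/
theorem one_reset_sequence_agreement
    (C : ℕ) (μ₁ μ₂ : ℝ) (hμ₁ : 0 < μ₁) (hμ₂ : 0 < μ₂)
    (hf₁pos : 0 < Int.fract μ₁) (hf₁half : Int.fract μ₁ ≠ 1 / 2)
    (hf₂pos : 0 < Int.fract μ₂) (hf₂half : Int.fract μ₂ ≠ 1 / 2)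
    (hfloor : ⌊μ₂⌋ = ⌊μ₁⌋)
    (hpol : (1 / 2 < Int.fract μ₁ ∧ 1 / 2 < Int.fract μ₂) ∨
            (Int.fract μ₁ < 1 / 2 ∧ Int.fract μ₂ < 1 / 2))
    (N : ℕ∞) (hN : 1 ≤ N)
    (v : ℕ → Fin 2 → ℝ) (hnn : ∀ i z, 0 ≤ v i z)
    (h0 : ∃ z, v 0 z = 0)
    (hstep : ∀ i : ℕ, ((i : ℕ∞) + 1) < N →
      ∃ δ : ℝ, 0 < δ ∧ ∀ z, v (i + 1) z = v i z + δ)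
    (w0 : Fin 2 → ℝ) (hw0nn : ∀ z, 0 ≤ w0 z)
    (hca : CompleteAgree C μ₁ μ₂ (v 0) w0) :
    ∃ w : ℕ → Fin 2 → ℝ, w 0 = w0 ∧
      (∀ i : ℕ, ((i : ℕ∞) + 1) < N →
        ∃ δ : ℝ, 0 < δ ∧ ∀ z, w (i + 1) z = w i z + δ) ∧
      (∀ i : ℕ, 1 ≤ i → (i : ℕ∞) < N → Agree2 C μ₁ μ₂ (v i) (w i)) :=
  one_reset_sequence_agreement_general C μ₁ μ₂ hf₁pos hf₁half hf₂pos hf₂half hfloor hpol N v hnn h0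
    hstep w0 hw0nn hca
end

section
/- In the setup of the context (valuations v1, v2 = v1 + δ over X = {x,y} with v1(z1) = 0, v1(z2) > 0, frac(v2(z1)) > 0, frac(v2(z2)) > 0, z20 = ⌊v1(z2)⌋, c1 = ⌊v2(z1)⌋, c2 = ⌊v2(z2)⌋, b = frac(v1(z2)), m = ⌊μ̄⌋): if c1 = m and c2 = z20 + c1, then: (a) if v2(z1) ≥ μ̄, there exists ε with 0 ≤ ε < 1 − (b + frac(μ̄)) such that frac(v2(z2)) = b + frac(μ̄) + ε, and ε = 0 if and only if v2(z1) = μ̄; (b) if v2(z1) < μ̄, there exists ε with 0 ≤ ε < frac(μ̄) such that frac(v2(z2)) = b + ε and b + ε < min(1, b + frac(μ̄)). -/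
/-- Case 3 of the fractional-value lemma: if `c1 = m` and `c2 = z20 + c1`, then
(a) if `v2 z1 ≥ μ`: `frac (v2 z2) = b + frac μ + ε` for some
`0 ≤ ε < 1 - (b + frac μ)`, with `ε = 0` iff `v2 z1 = μ`;
(b) if `v2 z1 < μ`: `frac (v2 z2) = b + ε` for some `0 ≤ ε < frac μ`, with
`b + ε < min 1 (b + frac μ)`.  Here `b = frac (v1 z2)`. -/
theorem frac_value_case3
    (μ : ℝ) (hμ : 0 < μ) (hμhalf : ∀ n : ℕ, 2 * μ ≠ (n : ℝ))
    (v1 v2 : Fin 2 → ℝ) (hnn : ∀ z, 0 ≤ v1 z)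
    (z1 z2 : Fin 2) (hz : z1 ≠ z2)
    (h10 : v1 z1 = 0) (h1pos : 0 < v1 z2)
    (δ : ℝ) (hδ : 0 < δ) (hv2 : ∀ z, v2 z = v1 z + δ)
    (hf1 : 0 < Int.fract (v2 z1)) (hf2 : 0 < Int.fract (v2 z2))
    (hc1 : ⌊v2 z1⌋ = ⌊μ⌋) (hc2 : ⌊v2 z2⌋ = ⌊v1 z2⌋ + ⌊v2 z1⌋) :
    (μ ≤ v2 z1 →
      ∃ ε : ℝ, 0 ≤ ε ∧ ε < 1 - (Int.fract (v1 z2) + Int.fract μ) ∧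
        Int.fract (v2 z2) = Int.fract (v1 z2) + Int.fract μ + ε ∧
        (ε = 0 ↔ v2 z1 = μ)) ∧
    (v2 z1 < μ →
      ∃ ε : ℝ, 0 ≤ ε ∧ ε < Int.fract μ ∧
        Int.fract (v2 z2) = Int.fract (v1 z2) + ε ∧
        Int.fract (v1 z2) + ε < min 1 (Int.fract (v1 z2) + Int.fract μ)) := by
  have hd1 : v2 z1 = δ := by rw [hv2, h10]; ring
  have hc2' : ⌊v2 z2⌋ = ⌊v1 z2⌋ + ⌊δ⌋ := by rw [hc2, hd1]
  have hkey : Int.fract (v2 z2) = Int.fract (v1 z2) + Int.fract δ := by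
    rw [Int.fract, hc2', hv2 z2, Int.fract, Int.fract]
    push_cast
    ring
  have hlt1 : Int.fract (v1 z2) + Int.fract δ < 1 := hkey ▸ Int.fract_lt_one _
  have hδf : ⌊δ⌋ = ⌊μ⌋ := by rw [← hd1]; exact hc1
  have hfd : Int.fract δ = δ - ⌊μ⌋ := by rw [Int.fract, hδf]
  have hfμ : Int.fract μ = μ - ⌊μ⌋ := rfl
  constructor
  · intro hge
    rw [hd1] at hge
    refine ⟨δ - μ, by linarith, by linarith, by rw [hkey, hfd, hfμ]; ring, ?_⟩
    constructor
    · intro h; rw [hd1]; linarith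
    · intro h; rw [hd1] at h; linarith
  · intro hlt
    rw [hd1] at hlt
    refine ⟨Int.fract δ, Int.fract_nonneg _, by linarith, hkey, ?_⟩
    exact lt_min (by linarith) (by linarith)
end

section
/- In the setup of the context (valuations v1, v2 = v1 + δ over X = {x,y} with v1(z1) = 0, v1(z2) > 0, frac(v2(z1)) > 0, frac(v2(z2)) > 0, z20 = ⌊v1(z2)⌋, c1 = ⌊v2(z1)⌋, c2 = ⌊v2(z2)⌋, b = frac(v1(z2)), m = ⌊μ̄⌋): if c1 = m and c2 = z20 + c1 + 1, then: (a) if 1 − b < frac(μ̄) and v2(z1) ≥ μ̄, there exists ε with 0 ≤ ε < 1 − frac(μ̄) such that frac(v2(z2)) = b − (1 − frac(μ̄)) + ε < b, and ε = 0 if and only if v2(z1) = μ̄; (b) if 1 − b < frac(μ̄) and v2(z1) < μ̄, there exists ε with 0 ≤ ε < b − (1 − frac(μ̄)) such that frac(v2(z2)) = ε; (c) if 1 − b ≥ frac(μ̄), there exists ε with 0 ≤ ε < b such that frac(v2(z2)) = ε. -/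
/-- Case 4 of the fractional-value lemma: if `c1 = m` and `c2 = z20 + c1 + 1`, then
(a) if `1 - b < frac μ` and `v2 z1 ≥ μ`: `frac (v2 z2) = b - (1 - frac μ) + ε < b`
for some `0 ≤ ε < 1 - frac μ`, with `ε = 0` iff `v2 z1 = μ`;
(b) if `1 - b < frac μ` and `v2 z1 < μ`: `frac (v2 z2) = ε` for some
`0 ≤ ε < b - (1 - frac μ)`;
(c) if `1 - b ≥ frac μ`: `frac (v2 z2) = ε` for some `0 ≤ ε < b`.
Here `b = frac (v1 z2)`. -/
theorem frac_value_case4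
    (μ : ℝ) (hμ : 0 < μ) (hμhalf : ∀ n : ℕ, 2 * μ ≠ (n : ℝ))
    (v1 v2 : Fin 2 → ℝ) (hnn : ∀ z, 0 ≤ v1 z)
    (z1 z2 : Fin 2) (hz : z1 ≠ z2)
    (h10 : v1 z1 = 0) (h1pos : 0 < v1 z2)
    (δ : ℝ) (hδ : 0 < δ) (hv2 : ∀ z, v2 z = v1 z + δ)
    (hf1 : 0 < Int.fract (v2 z1)) (hf2 : 0 < Int.fract (v2 z2))
    (hc1 : ⌊v2 z1⌋ = ⌊μ⌋) (hc2 : ⌊v2 z2⌋ = ⌊v1 z2⌋ + ⌊v2 z1⌋ + 1) :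
    (1 - Int.fract (v1 z2) < Int.fract μ → μ ≤ v2 z1 →
      ∃ ε : ℝ, 0 ≤ ε ∧ ε < 1 - Int.fract μ ∧
        Int.fract (v2 z2) = Int.fract (v1 z2) - (1 - Int.fract μ) + ε ∧
        Int.fract (v1 z2) - (1 - Int.fract μ) + ε < Int.fract (v1 z2) ∧
        (ε = 0 ↔ v2 z1 = μ)) ∧
    (1 - Int.fract (v1 z2) < Int.fract μ → v2 z1 < μ →
      ∃ ε : ℝ, 0 ≤ ε ∧ ε < Int.fract (v1 z2) - (1 - Int.fract μ) ∧
        Int.fract (v2 z2) = ε) ∧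
    (Int.fract μ ≤ 1 - Int.fract (v1 z2) →
      ∃ ε : ℝ, 0 ≤ ε ∧ ε < Int.fract (v1 z2) ∧
        Int.fract (v2 z2) = ε) := by

  have hv21 : v2 z1 = δ := by rw [hv2, h10]; ring
  have hfdm : Int.fract (v2 z1) - Int.fract μ = v2 z1 - μ := by
    simp only [Int.fract, hc1]; ring
  have hkey : Int.fract (v2 z2) = Int.fract (v1 z2) + Int.fract (v2 z1) - 1 := by
    have h2 := hv2 z2
    simp only [Int.fract, hc2]
    push_cast
    rw [h2, hv21]
    ring
  have hlt1 : Int.fract (v2 z1) < 1 := Int.fract_lt_one _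
  refine ⟨?_, ?_, ?_⟩
  · intro _ hge
    refine ⟨Int.fract (v2 z1) - Int.fract μ, by linarith, by linarith, by linarith,
      by linarith, ?_⟩
    constructor <;> intro h <;> linarith
  · intro _ hlt
    exact ⟨Int.fract (v2 z2), hf2.le, by linarith, rfl⟩
  · intro _
    exact ⟨Int.fract (v2 z2), hf2.le, by linarith, rfl⟩
end

section
/- In the setup of the context (valuations v1, v2 = v1 + δ over X = {x,y} with v1(z1) = 0, v1(z2) > 0, frac(v2(z1)) > 0, frac(v2(z2)) > 0, z20 = ⌊v1(z2)⌋, c1 = ⌊v2(z1)⌋, c2 = ⌊v2(z2)⌋, b = frac(v1(z2)), m = ⌊μ̄⌋): if c2 = m and c1 = c2 − z20 − 1, then: (a) if v2(z2) ≥ μ̄, there exists ε with 0 ≤ ε < b − frac(μ̄) such that frac(v2(z1)) = 1 − b + frac(μ̄) + ε, and ε = 0 if and only if v2(z2) = μ̄; (b) if v2(z2) < μ̄, there exists ε with 0 ≤ ε < frac(μ̄) such that frac(v2(z1)) = 1 − b + ε < min(1, 1 − b + frac(μ̄)). -/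
/-- Case 7 of the fractional-value lemma: if `c2 = m` and `c1 = c2 - z20 - 1`, then
(a) if `v2 z2 ≥ μ`: `frac (v2 z1) = 1 - b + frac μ + ε` for some
`0 ≤ ε < b - frac μ`, with `ε = 0` iff `v2 z2 = μ`;
(b) if `v2 z2 < μ`: `frac (v2 z1) = 1 - b + ε` for some `0 ≤ ε < frac μ`, with
`1 - b + ε < min 1 (1 - b + frac μ)`.  Here `b = frac (v1 z2)`. -/
theorem frac_value_case7
    (μ : ℝ) (hμ : 0 < μ) (hμhalf : ∀ n : ℕ, 2 * μ ≠ (n : ℝ))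
    (v1 v2 : Fin 2 → ℝ) (hnn : ∀ z, 0 ≤ v1 z)
    (z1 z2 : Fin 2) (hz : z1 ≠ z2)
    (h10 : v1 z1 = 0) (h1pos : 0 < v1 z2)
    (δ : ℝ) (hδ : 0 < δ) (hv2 : ∀ z, v2 z = v1 z + δ)
    (hf1 : 0 < Int.fract (v2 z1)) (hf2 : 0 < Int.fract (v2 z2))
    (hc2 : ⌊v2 z2⌋ = ⌊μ⌋) (hc1 : ⌊v2 z1⌋ = ⌊v2 z2⌋ - ⌊v1 z2⌋ - 1) :
    (μ ≤ v2 z2 →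
      ∃ ε : ℝ, 0 ≤ ε ∧ ε < Int.fract (v1 z2) - Int.fract μ ∧
        Int.fract (v2 z1) = 1 - Int.fract (v1 z2) + Int.fract μ + ε ∧
        (ε = 0 ↔ v2 z2 = μ)) ∧
    (v2 z2 < μ →
      ∃ ε : ℝ, 0 ≤ ε ∧ ε < Int.fract μ ∧
        Int.fract (v2 z1) = 1 - Int.fract (v1 z2) + ε ∧
        1 - Int.fract (v1 z2) + ε < min 1 (1 - Int.fract (v1 z2) + Int.fract μ)) := by
  have key : Int.fract (v2 z1) = 1 - Int.fract (v1 z2) + Int.fract (v2 z2) := by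
    have e1 : v2 z1 = δ := by rw [hv2, h10]; ring
    simp only [Int.fract]
    rw [hc1, e1, hv2 z2]
    push_cast
    ring
  have hlt1 : Int.fract (v2 z1) < 1 := Int.fract_lt_one _
  have hfb : Int.fract (v2 z2) < Int.fract (v1 z2) := by linarith
  have hdiff : Int.fract (v2 z2) - Int.fract μ = v2 z2 - μ := by
    simp only [Int.fract, hc2]; ring
  constructor
  · intro h
    refine ⟨Int.fract (v2 z2) - Int.fract μ, by linarith [hdiff], by linarith, by linarith, ?_⟩
    rw [hdiff]; constructor <;> intro h' <;> linarith
  · intro h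
    refine ⟨Int.fract (v2 z2), le_of_lt hf2, by linarith [hdiff], by linarith, ?_⟩
    have : 1 - Int.fract (v1 z2) + Int.fract (v2 z2) < 1 := by linarith
    have h2 : 1 - Int.fract (v1 z2) + Int.fract (v2 z2) < 1 - Int.fract (v1 z2) + Int.fract μ := by
      linarith [hdiff]
    exact lt_min this h2
end

section
/- In the setup of the context (valuations v1, v2 = v1 + δ over X = {x,y} with v1(z1) = 0, v1(z2) > 0, frac(v2(z1)) > 0, frac(v2(z2)) > 0, z20 = ⌊v1(z2)⌋, c1 = ⌊v2(z1)⌋, c2 = ⌊v2(z2)⌋, b = frac(v1(z2)), m = ⌊μ̄⌋): if c2 = m and c1 = c2 − z20, then: (a) if b < frac(μ̄) and v2(z2) ≥ μ̄, there exists ε with 0 ≤ ε < 1 − frac(μ̄) such that frac(v2(z1)) = 1 − b − (1 − frac(μ̄)) + ε < 1 − b, and ε = 0 if and only if v2(z2) = μ̄; (b) if b < frac(μ̄) and v2(z2) < μ̄, there exists ε with 0 ≤ ε < 1 − b − (1 − frac(μ̄)) such that frac(v2(z1)) = ε; (c) if b ≥ frac(μ̄), there exists ε with 0 ≤ ε <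 1 − b such that frac(v2(z1)) = ε. -/
/-- Case 8 of the fractional-value lemma: if `c2 = m` and `c1 = c2 - z20`, then
(a) if `b < frac μ` and `v2 z2 ≥ μ`: `frac (v2 z1) = 1 - b - (1 - frac μ) + ε < 1 - b`
for some `0 ≤ ε < 1 - frac μ`, with `ε = 0` iff `v2 z2 = μ`;
(b) if `b < frac μ` and `v2 z2 < μ`: `frac (v2 z1) = ε` for some
`0 ≤ ε < 1 - b - (1 - frac μ)`;
(c) if `b ≥ frac μ`: `frac (v2 z1) = ε` for some `0 ≤ ε < 1 - b`.
Here `b = frac (v1 z2)`. -/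
theorem frac_value_case8
    (μ : ℝ) (hμ : 0 < μ) (hμhalf : ∀ n : ℕ, 2 * μ ≠ (n : ℝ))
    (v1 v2 : Fin 2 → ℝ) (hnn : ∀ z, 0 ≤ v1 z)
    (z1 z2 : Fin 2) (hz : z1 ≠ z2)
    (h10 : v1 z1 = 0) (h1pos : 0 < v1 z2)
    (δ : ℝ) (hδ : 0 < δ) (hv2 : ∀ z, v2 z = v1 z + δ)
    (hf1 : 0 < Int.fract (v2 z1)) (hf2 : 0 < Int.fract (v2 z2))
    (hc2 : ⌊v2 z2⌋ = ⌊μ⌋) (hc1 : ⌊v2 z1⌋ = ⌊v2 z2⌋ - ⌊v1 z2⌋) :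
    (Int.fract (v1 z2) < Int.fract μ → μ ≤ v2 z2 →
      ∃ ε : ℝ, 0 ≤ ε ∧ ε < 1 - Int.fract μ ∧
        Int.fract (v2 z1) = 1 - Int.fract (v1 z2) - (1 - Int.fract μ) + ε ∧
        1 - Int.fract (v1 z2) - (1 - Int.fract μ) + ε < 1 - Int.fract (v1 z2) ∧
        (ε = 0 ↔ v2 z2 = μ)) ∧
    (Int.fract (v1 z2) < Int.fract μ → v2 z2 < μ →
      ∃ ε : ℝ, 0 ≤ ε ∧ ε < 1 - Int.fract (v1 z2) - (1 - Int.fract μ) ∧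
        Int.fract (v2 z1) = ε) ∧
    (Int.fract μ ≤ Int.fract (v1 z2) →
      ∃ ε : ℝ, 0 ≤ ε ∧ ε < 1 - Int.fract (v1 z2) ∧
        Int.fract (v2 z1) = ε) := by
  have e1 : v2 z1 = δ := by rw [hv2, h10]; ring
  have e2 : v2 z2 = v1 z2 + δ := hv2 z2
  have key : Int.fract (v2 z1) = Int.fract (v2 z2) - Int.fract (v1 z2) := by
    unfold Int.fract
    rw [hc1, e1, e2]
    push_cast
    ring
  have hdiff : Int.fract (v2 z2) - Int.fract μ = v2 z2 - μ := by
    unfold Int.fract; rw [hc2]; ring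
  have hlt1 : Int.fract (v2 z2) < 1 := Int.fract_lt_one _
  refine ⟨?_, ?_, ?_⟩
  · intro hb hge
    refine ⟨Int.fract (v2 z2) - Int.fract μ, by linarith, by linarith,
      by linarith [key], by linarith, ?_⟩
    constructor <;> intro h <;> linarith
  · intro hb hlt
    exact ⟨Int.fract (v2 z1), le_of_lt hf1, by linarith, rfl⟩
  · intro hb
    exact ⟨Int.fract (v2 z1), le_of_lt hf1, by linarith, rfl⟩
end
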